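/- arXiv:2210.11368 — 6 statements merged into one kernel-verified Lean document; each statement's English description precedes it below -/
import Mathlib

section
/- For every γ > 0 and every fixed q ∈ S_n(1), the function p ↦ W_γ(p,q) is γ-strongly convex on S_n(1) with respect to the ℓ2-norm, i.e., for all p, p' ∈ S_n(1) and t ∈ [0,1], W_γ(tp+(1−t)p', q) ≤ t·W_γ(p,q) + (1−t)·W_γ(p',q) − (γ/2)t(1−t)‖p−p'‖₂². -/
open Finset

/-- The entropy-regularized OT value `W_γ(p,q)`. -/
noncomputable def Wgamma (n : ℕ) (C : Matrix (Fin n) (Fin n) ℝ) (γ : ℝ)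
    (p q : Fin n → ℝ) : ℝ :=
  sInf ((fun π : Matrix (Fin n) (Fin n) ℝ =>
      (∑ i, ∑ j, C i j * π i j) + γ * ∑ i, ∑ j, π i j * Real.log (π i j)) ''
    {π | (∀ i j, 0 ≤ π i j) ∧ (∀ i, ∑ j, π i j = p i) ∧ (∀ j, ∑ i, π i j = q j)})

/-!
The entropy term carries all the strong convexity. On `[0, a + b]` the function `x ↦ x log x`
has second derivative `1 / x ≥ 1 / (a + b)`, so along the segment between two plans `π, π'`
the convexity gap of `H` is at least `t(1-t)/2 · Σ (π - π')² / (π + π')`. By Cauchy–Schwarz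
(both plans have mass one) this is at least `t(1-t)/4 · ‖π - π'‖₁²`; the `ℓ₁` distance only
shrinks when passing to row marginals, and a zero-sum vector `v` satisfies `‖v‖₁² ≥ 2‖v‖₂²`.
The cost term is linear, and mixing any plan for `p` with any plan for `p'` gives a plan for
`tp + (1-t)p'`, so the inequality between plans passes to the infima.
-/

lemma strongConvexOn_mul_log_Icc (M : ℝ) :
    StrongConvexOn (Set.Icc 0 M) M⁻¹ fun x : ℝ ↦ x * Real.log x := by
  simp_rw [strongConvexOn_iff_convex, Real.norm_eq_abs, sq_abs]
  refine convexOn_of_hasDerivWithinAt2_nonneg (f' := fun x ↦ Real.log x + 1 - M⁻¹ * x)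
    (f'' := fun x ↦ x⁻¹ - M⁻¹) (convex_Icc 0 M) (by fun_prop) ?_ ?_ ?_ <;>
    simp only [interior_Icc] <;> rintro x ⟨hx0, hxM⟩
  · refine HasDerivAt.hasDerivWithinAt ?_
    convert (Real.hasDerivAt_mul_log hx0.ne').fun_sub
      ((hasDerivAt_pow 2 x).const_mul (M⁻¹ / 2)) using 1
    push_cast
    ring
  · exact ((((Real.hasDerivAt_log hx0.ne').add_const 1).fun_sub
      ((hasDerivAt_id x).const_mul M⁻¹))).hasDerivWithinAt.congr_deriv (by simp)
  · exact sub_nonneg.2 (inv_anti₀ hx0 hxM.le)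

lemma mul_log_combo_add_le {a b t : ℝ} (ha : 0 ≤ a) (hb : 0 ≤ b) (ht₀ : 0 ≤ t) (ht₁ : t ≤ 1) :
    (t * a + (1 - t) * b) * Real.log (t * a + (1 - t) * b)
        + t * (1 - t) / 2 * ((a - b) ^ 2 / (a + b))
      ≤ t * (a * Real.log a) + (1 - t) * (b * Real.log b) := by
  have h := (strongConvexOn_mul_log_Icc (a + b)).2 ⟨ha, le_add_of_nonneg_right hb⟩
    ⟨hb, le_add_of_nonneg_left ha⟩ ht₀ (sub_nonneg.2 ht₁) (by ring)
  simp only [smul_eq_mul, Real.norm_eq_abs, sq_abs] at h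
  have hφ : t * (1 - t) / 2 * ((a - b) ^ 2 / (a + b))
      = t * (1 - t) * ((a + b)⁻¹ / 2 * (a - b) ^ 2) := by ring
  linarith

section Finite

variable {ι : Type*} [Fintype ι]

lemma sum_mul_log_combo_add_le {a b : ι → ℝ} {t : ℝ} (ha : ∀ i, 0 ≤ a i) (hb : ∀ i, 0 ≤ b i)
    (ht₀ : 0 ≤ t) (ht₁ : t ≤ 1) :
    ∑ i, (t * a i + (1 - t) * b i) * Real.log (t * a i + (1 - t) * b i)
        + t * (1 - t) / 2 * ∑ i, (a i - b i) ^ 2 / (a i + b i)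
      ≤ t * ∑ i, a i * Real.log (a i) + (1 - t) * ∑ i, b i * Real.log (b i) := by
  simp only [mul_sum, ← sum_add_distrib]
  exact sum_le_sum fun i _ ↦ mul_log_combo_add_le (ha i) (hb i) ht₀ ht₁

lemma sq_sum_abs_sub_le {a b : ι → ℝ} (ha : ∀ i, 0 ≤ a i) (hb : ∀ i, 0 ≤ b i) :
    (∑ i, |a i - b i|) ^ 2 ≤ (∑ i, (a i + b i)) * ∑ i, (a i - b i) ^ 2 / (a i + b i) := by
  refine sum_sq_le_sum_mul_sum_of_sq_le_mul _ (fun i _ ↦ add_nonneg (ha i) (hb i))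
    (fun i _ ↦ div_nonneg (sq_nonneg _) (add_nonneg (ha i) (hb i))) fun i _ ↦ ?_
  rw [sq_abs]
  rcases (add_nonneg (ha i) (hb i)).eq_or_lt with h | h
  · simp [show a i = 0 by linarith [ha i, hb i], show b i = 0 by linarith [ha i, hb i]]
  · rw [mul_div_cancel₀ _ h.ne']

lemma two_mul_sum_sq_le_sq_sum_abs {v : ι → ℝ} (hv : ∑ i, v i = 0) :
    2 * ∑ i, v i ^ 2 ≤ (∑ i, |v i|) ^ 2 := by
  classical
  have hhalf : ∀ i, 2 * |v i| ≤ ∑ j, |v j| := fun i ↦ by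
    have hrest : v i = -∑ j ∈ univ.erase i, v j := by
      linarith [add_sum_erase univ v (mem_univ i)]
    have := abs_sum_le_sum_abs v (univ.erase i)
    rw [← add_sum_erase univ _ (mem_univ i), two_mul, hrest, abs_neg]
    linarith
  calc 2 * ∑ i, v i ^ 2 = ∑ i, |v i| * (2 * |v i|) := by
        rw [mul_sum]; exact sum_congr rfl fun i _ ↦ by rw [← sq_abs]; ring
    _ ≤ ∑ i, |v i| * ∑ j, |v j| := sum_le_sum fun i _ ↦ by gcongr; exact hhalf i
    _ = (∑ i, |v i|) ^ 2 := by rw [← sum_mul, sq]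

end Finite

section Transport

variable {m n : Type*} [Fintype m] [Fintype n]

lemma sum_sq_sub_rowSum_le {π π' : Matrix m n ℝ} (hπ : ∀ i j, 0 ≤ π i j)
    (hπ' : ∀ i j, 0 ≤ π' i j) (hmass : ∑ i, ∑ j, π i j = 1) (hmass' : ∑ i, ∑ j, π' i j = 1) :
    ∑ i, (∑ j, π i j - ∑ j, π' i j) ^ 2
      ≤ ∑ i, ∑ j, (π i j - π' i j) ^ 2 / (π i j + π' i j) := by
  set v : m → ℝ := fun i ↦ ∑ j, π i j - ∑ j, π' i j
  have hv : ∑ i, v i = 0 := by simp only [v, sum_sub_distrib, hmass, hmass', sub_self]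
  have hrow : ∑ i, |v i| ≤ ∑ i, ∑ j, |π i j - π' i j| := sum_le_sum fun i _ ↦ by
    simpa only [v, ← sum_sub_distrib] using abs_sum_le_sum_abs _ _
  have hcs := sq_sum_abs_sub_le (ι := m × n) (fun x ↦ hπ x.1 x.2) (fun x ↦ hπ' x.1 x.2)
  simp only [Fintype.sum_prod_type, sum_add_distrib, hmass, hmass', one_add_one_eq_two] at hcs
  calc ∑ i, v i ^ 2 ≤ (∑ i, |v i|) ^ 2 / 2 := by linarith [two_mul_sum_sq_le_sq_sum_abs hv]
    _ ≤ (∑ i, ∑ j, |π i j - π' i j|) ^ 2 / 2 := by gcongr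
    _ ≤ ∑ i, ∑ j, (π i j - π' i j) ^ 2 / (π i j + π' i j) := by linarith

def transportPlans (p : m → ℝ) (q : n → ℝ) : Set (Matrix m n ℝ) :=
  {π | (∀ i j, 0 ≤ π i j) ∧ (∀ i, ∑ j, π i j = p i) ∧ (∀ j, ∑ i, π i j = q j)}

noncomputable def entropicCost (C : Matrix m n ℝ) (γ : ℝ) (π : Matrix m n ℝ) : ℝ :=
  (∑ i, ∑ j, C i j * π i j) + γ * ∑ i, ∑ j, π i j * Real.log (π i j)

lemma transportPlans_nonempty {p : m → ℝ} {q : n → ℝ} (hp : p ∈ stdSimplex ℝ m)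
    (hq : q ∈ stdSimplex ℝ n) : (transportPlans p q).Nonempty :=
  ⟨fun i j ↦ p i * q j, fun i j ↦ mul_nonneg (hp.1 i) (hq.1 j),
    fun i ↦ by rw [← mul_sum, hq.2, mul_one], fun j ↦ by rw [← sum_mul, hp.2, one_mul]⟩

lemma combo_mem_transportPlans {p p' : m → ℝ} {q : n → ℝ} {π π' : Matrix m n ℝ} {t : ℝ}
    (hπ : π ∈ transportPlans p q) (hπ' : π' ∈ transportPlans p' q) (ht₀ : 0 ≤ t) (ht₁ : t ≤ 1) :
    (fun i j ↦ t * π i j + (1 - t) * π' i j)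
      ∈ transportPlans (fun i ↦ t * p i + (1 - t) * p' i) q := by
  obtain ⟨hπ₀, hrow, hcol⟩ := hπ
  obtain ⟨hπ₀', hrow', hcol'⟩ := hπ'
  refine ⟨fun i j ↦ ?_, fun i ↦ ?_, fun j ↦ ?_⟩
  · exact add_nonneg (mul_nonneg ht₀ (hπ₀ i j)) (mul_nonneg (sub_nonneg.2 ht₁) (hπ₀' i j))
  · rw [sum_add_distrib, ← mul_sum, ← mul_sum, hrow, hrow']
  · rw [sum_add_distrib, ← mul_sum, ← mul_sum, hcol, hcol']; ring

lemma entropicCost_bddBelow {C : Matrix m n ℝ} (hC : ∀ i j, 0 ≤ C i j) {γ : ℝ} (hγ : 0 ≤ γ)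
    (S : Set (Matrix m n ℝ)) (hS : ∀ π ∈ S, ∀ i j, 0 ≤ π i j) :
    BddBelow (entropicCost C γ '' S) := by
  refine ⟨γ * ∑ _i : m, ∑ _j : n, (-1), ?_⟩
  rintro _ ⟨π, hπ, rfl⟩
  have hcost : 0 ≤ ∑ i, ∑ j, C i j * π i j :=
    sum_nonneg fun i _ ↦ sum_nonneg fun j _ ↦ mul_nonneg (hC i j) (hS π hπ i j)
  have hent : ∑ _i : m, ∑ _j : n, (-1 : ℝ) ≤ ∑ i, ∑ j, π i j * Real.log (π i j) :=
    sum_le_sum fun i _ ↦ sum_le_sum fun j _ ↦ by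
      linarith [Real.self_sub_one_le_mul_log (hS π hπ i j), hS π hπ i j]
  have := mul_le_mul_of_nonneg_left hent hγ
  rw [entropicCost]
  linarith

lemma entropicCost_combo_le {C : Matrix m n ℝ} {γ : ℝ} (hγ : 0 ≤ γ) {p p' : m → ℝ} {q : n → ℝ}
    (hp : ∑ i, p i = 1) (hp' : ∑ i, p' i = 1) {π π' : Matrix m n ℝ}
    (hπ : π ∈ transportPlans p q) (hπ' : π' ∈ transportPlans p' q) {t : ℝ}
    (ht₀ : 0 ≤ t) (ht₁ : t ≤ 1) :
    entropicCost C γ (fun i j ↦ t * π i j + (1 - t) * π' i j)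
      ≤ t * entropicCost C γ π + (1 - t) * entropicCost C γ π'
        - γ / 2 * (t * (1 - t)) * ∑ i, (p i - p' i) ^ 2 := by
  obtain ⟨hπ₀, hrow, -⟩ := hπ
  obtain ⟨hπ₀', hrow', -⟩ := hπ'
  have hent := sum_mul_log_combo_add_le (ι := m × n) (fun x ↦ hπ₀ x.1 x.2)
    (fun x ↦ hπ₀' x.1 x.2) ht₀ ht₁
  simp only [Fintype.sum_prod_type] at hent
  have hmarg := sum_sq_sub_rowSum_le hπ₀ hπ₀' (by simp only [hrow, hp])
    (by simp only [hrow', hp'])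
  simp only [hrow, hrow'] at hmarg
  have hlin : ∑ i, ∑ j, C i j * (t * π i j + (1 - t) * π' i j)
      = t * ∑ i, ∑ j, C i j * π i j + (1 - t) * ∑ i, ∑ j, C i j * π' i j := by
    simp only [mul_sum, ← sum_add_distrib]
    exact sum_congr rfl fun i _ ↦ sum_congr rfl fun j _ ↦ by ring
  have := mul_le_mul_of_nonneg_left hent hγ
  have := mul_le_mul_of_nonneg_left hmarg (by positivity : 0 ≤ γ / 2 * (t * (1 - t)))
  simp only [entropicCost, hlin]
  linarith

end Transport

lemma Wgamma_eq_sInf (n : ℕ) (C : Matrix (Fin n) (Fin n) ℝ) (γ : ℝ) (p q : Fin n → ℝ) :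
    Wgamma n C γ p q = sInf (entropicCost C γ '' transportPlans p q) := rfl

lemma le_mul_csInf {S : Set ℝ} (hS : S.Nonempty) {a t : ℝ} (ht : 0 ≤ t)
    (h : ∀ x ∈ S, a ≤ t * x) : a ≤ t * sInf S := by
  rw [← smul_eq_mul, ← Real.sInf_smul_of_nonneg ht]
  exact le_csInf (hS.smul_set) (by rintro _ ⟨x, hx, rfl⟩; exact h x hx)

lemma csInf_le_combo_sub {S S' T : Set ℝ} (hS : S.Nonempty) (hS' : S'.Nonempty)
    (hT : BddBelow T) {t c : ℝ} (ht₀ : 0 ≤ t) (ht₁ : t ≤ 1)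
    (h : ∀ x ∈ S, ∀ y ∈ S', ∃ z ∈ T, z ≤ t * x + (1 - t) * y - c) :
    sInf T ≤ t * sInf S + (1 - t) * sInf S' - c := by
  suffices sInf T + c - t * sInf S ≤ (1 - t) * sInf S' by linarith
  refine le_mul_csInf hS' (sub_nonneg.2 ht₁) fun y hy ↦ ?_
  suffices sInf T + c - (1 - t) * y ≤ t * sInf S by linarith
  refine le_mul_csInf hS ht₀ fun x hx ↦ ?_
  obtain ⟨z, hz, hzle⟩ := h x hx y hy
  linarith [csInf_le hT hz]

theorem Wgamma_strongly_convex_in_p_general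
    (n : ℕ) (C : Matrix (Fin n) (Fin n) ℝ)
    (hC : ∀ i j, 0 ≤ C i j) (γ : ℝ) (hγ : 0 < γ)
    (q : Fin n → ℝ) (hq : (∀ i, 0 ≤ q i) ∧ ∑ i, q i = 1) :
    ∀ p p' : Fin n → ℝ,
      ((∀ i, 0 ≤ p i) ∧ ∑ i, p i = 1) → ((∀ i, 0 ≤ p' i) ∧ ∑ i, p' i = 1) →
      ∀ t : ℝ, t ∈ Set.Icc (0 : ℝ) 1 →
        Wgamma n C γ (fun i => t * p i + (1 - t) * p' i) q
          ≤ t * Wgamma n C γ p q + (1 - t) * Wgamma n C γ p' q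
            - γ / 2 * (t * (1 - t)) * (Real.sqrt (∑ i, (p i - p' i) ^ 2)) ^ 2 := by
  intro p p' hp hp' t ⟨ht₀, ht₁⟩
  rw [Real.sq_sqrt (sum_nonneg fun i _ ↦ sq_nonneg _), Wgamma_eq_sInf, Wgamma_eq_sInf,
    Wgamma_eq_sInf]
  refine csInf_le_combo_sub ((transportPlans_nonempty hp hq).image _)
    ((transportPlans_nonempty hp' hq).image _)
    (entropicCost_bddBelow hC hγ.le _ fun π hπ ↦ hπ.1) ht₀ ht₁ ?_
  rintro _ ⟨π, hπ, rfl⟩ _ ⟨π', hπ', rfl⟩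
  exact ⟨_, ⟨_, combo_mem_transportPlans hπ hπ' ht₀ ht₁, rfl⟩,
    entropicCost_combo_le hγ.le hp.2 hp'.2 hπ hπ' ht₀ ht₁⟩

/-- for fixed `q` in the simplex, `p ↦ W_γ(p,q)` is `γ`-strongly convex
on the simplex with respect to the `ℓ₂`-norm. -/
theorem Wgamma_strongly_convex_in_p
    (n : ℕ) (hn : 2 ≤ n) (C : Matrix (Fin n) (Fin n) ℝ)
    (hC : ∀ i j, 0 ≤ C i j) (γ : ℝ) (hγ : 0 < γ)
    (q : Fin n → ℝ) (hq : (∀ i, 0 ≤ q i) ∧ ∑ i, q i = 1) :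
    ∀ p p' : Fin n → ℝ,
      ((∀ i, 0 ≤ p i) ∧ ∑ i, p i = 1) → ((∀ i, 0 ≤ p' i) ∧ ∑ i, p' i = 1) →
      ∀ t : ℝ, t ∈ Set.Icc (0 : ℝ) 1 →
        Wgamma n C γ (fun i => t * p i + (1 - t) * p' i) q
          ≤ t * Wgamma n C γ p q + (1 - t) * Wgamma n C γ p' q
            - γ / 2 * (t * (1 - t)) * (Real.sqrt (∑ i, (p i - p' i) ^ 2)) ^ 2 :=
  Wgamma_strongly_convex_in_p_general n C hC γ hγ q hq
end

section
/- Closed form of the Kullback–Leibler projection onto a marginal constraint: let π' ∈ ℝ^{n×n} have strictly positive entries, let p ∈ ℝ^n have strictly positive entries, and let C₁ := {π ∈ ℝ^{n×n} : π_{ij} ≥ 0, π·1 = p}. Then the unique minimizer of KL(π | π') over π ∈ C₁ is the matrix π with entries π_{ij} = p_i π'_{ij} / (π'·1)_i. Analogously, for C₂ := {π : π_{ij} ≥ 0, π^T·1 = q} with q having strictly positive entries, the unique minimizer is π_{ij} = q_j π'_{ij} / (π'^T·1)_j. -/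
open Finset

/-- Kullback–Leibler divergence between nonnegative matrices
(`0 ln 0 := 0`, which is automatic since `Real.log 0 = 0`). -/
noncomputable def KLmat (n : ℕ) (π π' : Matrix (Fin n) (Fin n) ℝ) : ℝ :=
  ∑ i, ∑ j, (π i j * Real.log (π i j / π' i j) - π i j + π' i j)

/-!
Row by row, the divergence splits as `KL(π_i | π'_i) = KL(p_i | (π'·1)_i) + KL(π_i | π̂_i)`,
where `π̂_i = p_i π'_i / (π'·1)_i` is the rescaled row: a chain rule for the divergence of
unnormalised measures. On `C₁` the first summand does not depend on `π`, and the second is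
nonnegative and vanishes only at `π = π̂`. The column case is the row case for transposes.
-/

open InformationTheory
open scoped Matrix

/-- The summand of the divergence; with it, `KLmat n π π' = ∑ i, ∑ j, klTerm (π i j) (π' i j)`
holds by `rfl`. -/
noncomputable def klTerm (t s : ℝ) : ℝ := t * Real.log (t / s) - t + s

theorem klTerm_eq_mul_klFun (t : ℝ) {s : ℝ} (hs : s ≠ 0) : klTerm t s = s * klFun (t / s) := by
  rw [klTerm, klFun_apply]
  field_simp
  ring

theorem klTerm_nonneg {t s : ℝ} (ht : 0 ≤ t) (hs : 0 < s) : 0 ≤ klTerm t s := by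
  rw [klTerm_eq_mul_klFun t hs.ne']
  exact mul_nonneg hs.le (klFun_nonneg (div_nonneg ht hs.le))

theorem klTerm_eq_zero_iff {t s : ℝ} (ht : 0 ≤ t) (hs : 0 < s) : klTerm t s = 0 ↔ t = s := by
  rw [klTerm_eq_mul_klFun t hs.ne', mul_eq_zero, klFun_eq_zero_iff (div_nonneg ht hs.le),
    div_eq_one_iff_eq hs.ne']
  simp [hs.ne']

@[simp]
theorem klTerm_self (t : ℝ) : klTerm t t = 0 := by
  by_cases ht : t = 0 <;> simp [klTerm, ht]

theorem sum_mul_div_sum {ι : Type*} [Fintype ι] (c : ℝ) {a : ι → ℝ} (ha : ∑ k, a k ≠ 0) :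
    ∑ j, c * a j / ∑ k, a k = c := by
  rw [← Finset.sum_div, ← Finset.mul_sum, mul_div_assoc, div_self ha, mul_one]

/-- Moving the reference point from `s` to `c * s / S` changes the summand by a term that is
linear in `t` and `s`; summed over a row with `∑ t = c` and `∑ s = S` it becomes `klTerm c S`. -/
theorem klTerm_eq_klTerm_mul_div_add (t : ℝ) {s c S : ℝ} (hs : s ≠ 0) (hc : c ≠ 0) (hS : S ≠ 0) :
    klTerm t s = klTerm t (c * s / S) + (t * Real.log (c / S) + s - c * s / S) := by
  by_cases ht : t = 0
  · simp [klTerm, ht]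
  · have hsplit : t / s = t / (c * s / S) * (c / S) := by field_simp
    rw [klTerm, klTerm, hsplit, Real.log_mul (by positivity) (by positivity)]
    ring

theorem sum_klTerm_eq_klTerm_sum_add {ι : Type*} [Fintype ι] {x a : ι → ℝ}
    (ha : ∀ j, a j ≠ 0) (hx : ∑ j, x j ≠ 0) (hS : ∑ j, a j ≠ 0) :
    ∑ j, klTerm (x j) (a j) =
      klTerm (∑ j, x j) (∑ j, a j) + ∑ j, klTerm (x j) ((∑ k, x k) * a j / ∑ k, a k) := by
  set c := ∑ j, x j
  set S := ∑ j, a j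
  calc ∑ j, klTerm (x j) (a j)
      = ∑ j, (klTerm (x j) (c * a j / S) + (x j * Real.log (c / S) + a j - c * a j / S)) :=
        Finset.sum_congr rfl fun j _ => klTerm_eq_klTerm_mul_div_add (x j) (ha j) hx hS
    _ = ∑ j, klTerm (x j) (c * a j / S) + (c * Real.log (c / S) + S - c) := by
        rw [Finset.sum_add_distrib, Finset.sum_sub_distrib, Finset.sum_add_distrib,
          ← Finset.sum_mul, sum_mul_div_sum c hS]
    _ = klTerm c S + ∑ j, klTerm (x j) (c * a j / S) := by
        rw [klTerm]
        ring

section RowMarginal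

variable {n : ℕ} (p : Fin n → ℝ) (π' : Matrix (Fin n) (Fin n) ℝ)

/-- The set `C₁` of the paper. -/
def rowMarginals : Set (Matrix (Fin n) (Fin n) ℝ) :=
  {π | (∀ i j, 0 ≤ π i j) ∧ ∀ i, ∑ j, π i j = p i}

noncomputable def rowProj : Matrix (Fin n) (Fin n) ℝ :=
  Matrix.of fun i j => p i * π' i j / ∑ k, π' i k

variable {p π'}

theorem rowSum_pos (hπ' : ∀ i j, 0 < π' i j) (i : Fin n) : 0 < ∑ k, π' i k :=
  Finset.sum_pos (fun k _ => hπ' i k) ⟨i, Finset.mem_univ i⟩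

theorem rowProj_pos (hπ' : ∀ i j, 0 < π' i j) (hp : ∀ i, 0 < p i) (i j : Fin n) :
    0 < rowProj p π' i j :=
  div_pos (mul_pos (hp i) (hπ' i j)) (rowSum_pos hπ' i)

theorem rowProj_mem_rowMarginals (hπ' : ∀ i j, 0 < π' i j) (hp : ∀ i, 0 < p i) :
    rowProj p π' ∈ rowMarginals p :=
  ⟨fun i j => (rowProj_pos hπ' hp i j).le,
    fun i => sum_mul_div_sum (p i) (rowSum_pos hπ' i).ne'⟩

theorem KLmat_eq_sum_klTerm_add (hπ' : ∀ i j, 0 < π' i j) (hp : ∀ i, 0 < p i)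
    {π : Matrix (Fin n) (Fin n) ℝ} (hπ : ∀ i, ∑ j, π i j = p i) :
    KLmat n π π' = ∑ i, klTerm (p i) (∑ k, π' i k) +
      ∑ i, ∑ j, klTerm (π i j) (rowProj p π' i j) := by
  rw [← Finset.sum_add_distrib]
  refine Finset.sum_congr rfl fun i _ => ?_
  have hrow := sum_klTerm_eq_klTerm_sum_add (x := π i) (fun j => (hπ' i j).ne')
    (by rw [hπ i]; exact (hp i).ne') (rowSum_pos hπ' i).ne'
  simp only [hπ i] at hrow
  exact hrow

theorem KLmat_eq_KLmat_rowProj_add (hπ' : ∀ i j, 0 < π' i j) (hp : ∀ i, 0 < p i)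
    {π : Matrix (Fin n) (Fin n) ℝ} (hπ : ∀ i, ∑ j, π i j = p i) :
    KLmat n π π' = KLmat n (rowProj p π') π' + ∑ i, ∑ j, klTerm (π i j) (rowProj p π' i j) := by
  rw [KLmat_eq_sum_klTerm_add hπ' hp hπ,
    KLmat_eq_sum_klTerm_add hπ' hp (rowProj_mem_rowMarginals hπ' hp).2]
  simp

theorem KLmat_rowProj_le (hπ' : ∀ i j, 0 < π' i j) (hp : ∀ i, 0 < p i)
    {π : Matrix (Fin n) (Fin n) ℝ} (hπ : π ∈ rowMarginals p) :
    KLmat n (rowProj p π') π' ≤ KLmat n π π' := by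
  rw [KLmat_eq_KLmat_rowProj_add hπ' hp hπ.2, le_add_iff_nonneg_right]
  exact Finset.sum_nonneg fun i _ => Finset.sum_nonneg fun j _ =>
    klTerm_nonneg (hπ.1 i j) (rowProj_pos hπ' hp i j)

theorem eq_rowProj_of_KLmat_le (hπ' : ∀ i j, 0 < π' i j) (hp : ∀ i, 0 < p i)
    {π : Matrix (Fin n) (Fin n) ℝ} (hπ : π ∈ rowMarginals p)
    (hle : KLmat n π π' ≤ KLmat n (rowProj p π') π') :
    π = rowProj p π' := by
  have hterm_nonneg : ∀ i j, 0 ≤ klTerm (π i j) (rowProj p π' i j) := fun i j =>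
    klTerm_nonneg (hπ.1 i j) (rowProj_pos hπ' hp i j)
  have hsum_zero : ∑ i, ∑ j, klTerm (π i j) (rowProj p π' i j) = 0 := by
    rw [KLmat_eq_KLmat_rowProj_add hπ' hp hπ.2] at hle
    exact le_antisymm (by linarith)
      (Finset.sum_nonneg fun i _ => Finset.sum_nonneg fun j _ => hterm_nonneg i j)
  ext i j
  rw [Finset.sum_eq_zero_iff_of_nonneg fun i _ =>
    Finset.sum_nonneg fun j _ => hterm_nonneg i j] at hsum_zero
  have hrow := hsum_zero i (Finset.mem_univ i)
  rw [Finset.sum_eq_zero_iff_of_nonneg fun j _ => hterm_nonneg i j] at hrow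
  exact (klTerm_eq_zero_iff (hπ.1 i j) (rowProj_pos hπ' hp i j)).1 (hrow j (Finset.mem_univ j))

end RowMarginal

section ColMarginal

variable {n : ℕ} (q : Fin n → ℝ) (π' : Matrix (Fin n) (Fin n) ℝ)

/-- The set `C₂` of the paper. -/
def colMarginals : Set (Matrix (Fin n) (Fin n) ℝ) :=
  {π | (∀ i j, 0 ≤ π i j) ∧ ∀ j, ∑ i, π i j = q j}

noncomputable def colProj : Matrix (Fin n) (Fin n) ℝ :=
  Matrix.of fun i j => q j * π' i j / ∑ k, π' k j

variable {q π'}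

theorem KLmat_transpose (π : Matrix (Fin n) (Fin n) ℝ) :
    KLmat n πᵀ π'ᵀ = KLmat n π π' :=
  Finset.sum_comm

theorem transpose_mem_rowMarginals_iff {π : Matrix (Fin n) (Fin n) ℝ} :
    πᵀ ∈ rowMarginals q ↔ π ∈ colMarginals q :=
  ⟨fun h => ⟨fun i j => h.1 j i, h.2⟩, fun h => ⟨fun i j => h.1 j i, h.2⟩⟩

theorem rowProj_transpose : rowProj q π'ᵀ = (colProj q π')ᵀ := rfl

theorem colProj_mem_colMarginals (hπ' : ∀ i j, 0 < π' i j) (hq : ∀ j, 0 < q j) :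
    colProj q π' ∈ colMarginals q :=
  transpose_mem_rowMarginals_iff.1 <|
    rowProj_mem_rowMarginals (π' := π'ᵀ) (fun i j => hπ' j i) hq

theorem KLmat_colProj_le (hπ' : ∀ i j, 0 < π' i j) (hq : ∀ j, 0 < q j)
    {π : Matrix (Fin n) (Fin n) ℝ} (hπ : π ∈ colMarginals q) :
    KLmat n (colProj q π') π' ≤ KLmat n π π' := by
  have h := KLmat_rowProj_le (π' := π'ᵀ) (fun i j => hπ' j i) hq
    (transpose_mem_rowMarginals_iff.2 hπ)
  rwa [rowProj_transpose, KLmat_transpose, KLmat_transpose] at h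

theorem eq_colProj_of_KLmat_le (hπ' : ∀ i j, 0 < π' i j) (hq : ∀ j, 0 < q j)
    {π : Matrix (Fin n) (Fin n) ℝ} (hπ : π ∈ colMarginals q)
    (hle : KLmat n π π' ≤ KLmat n (colProj q π') π') :
    π = colProj q π' := by
  rw [← KLmat_transpose, ← KLmat_transpose (colProj q π'), ← rowProj_transpose] at hle
  exact Matrix.transpose_inj.1 <| eq_rowProj_of_KLmat_le (π' := π'ᵀ) (fun i j => hπ' j i) hq
    (transpose_mem_rowMarginals_iff.2 hπ) hle

end ColMarginal

theorem kl_projection_closed_form_general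
    (n : ℕ) (π' : Matrix (Fin n) (Fin n) ℝ)
    (hπ' : ∀ i j, 0 < π' i j)
    (p : Fin n → ℝ) (hp : ∀ i, 0 < p i)
    (q : Fin n → ℝ) (hq : ∀ j, 0 < q j) :
    (((∀ i j, (0:ℝ) ≤ p i * π' i j / (∑ k, π' i k)) ∧
        (∀ i, ∑ j, p i * π' i j / (∑ k, π' i k) = p i)) ∧
      (∀ π : Matrix (Fin n) (Fin n) ℝ,
        ((∀ i j, 0 ≤ π i j) ∧ (∀ i, ∑ j, π i j = p i)) →
        KLmat n (Matrix.of fun i j => p i * π' i j / (∑ k, π' i k)) π' ≤ KLmat n π π') ∧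
      (∀ π : Matrix (Fin n) (Fin n) ℝ,
        ((∀ i j, 0 ≤ π i j) ∧ (∀ i, ∑ j, π i j = p i)) →
        (∀ τ : Matrix (Fin n) (Fin n) ℝ,
          ((∀ i j, 0 ≤ τ i j) ∧ (∀ i, ∑ j, τ i j = p i)) → KLmat n π π' ≤ KLmat n τ π') →
        π = Matrix.of fun i j => p i * π' i j / (∑ k, π' i k)))
    ∧
    (((∀ i j, (0:ℝ) ≤ q j * π' i j / (∑ k, π' k j)) ∧
        (∀ j, ∑ i, q j * π' i j / (∑ k, π' k j) = q j)) ∧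
      (∀ π : Matrix (Fin n) (Fin n) ℝ,
        ((∀ i j, 0 ≤ π i j) ∧ (∀ j, ∑ i, π i j = q j)) →
        KLmat n (Matrix.of fun i j => q j * π' i j / (∑ k, π' k j)) π' ≤ KLmat n π π') ∧
      (∀ π : Matrix (Fin n) (Fin n) ℝ,
        ((∀ i j, 0 ≤ π i j) ∧ (∀ j, ∑ i, π i j = q j)) →
        (∀ τ : Matrix (Fin n) (Fin n) ℝ,
          ((∀ i j, 0 ≤ τ i j) ∧ (∀ j, ∑ i, τ i j = q j)) → KLmat n π π' ≤ KLmat n τ π') →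
        π = Matrix.of fun i j => q j * π' i j / (∑ k, π' k j))) := by
  have hrow := rowProj_mem_rowMarginals hπ' hp
  have hcol := colProj_mem_colMarginals hπ' hq
  exact ⟨⟨hrow, fun π hπ => KLmat_rowProj_le hπ' hp hπ,
      fun π hπ hmin => eq_rowProj_of_KLmat_le hπ' hp hπ (hmin _ hrow)⟩,
    ⟨hcol, fun π hπ => KLmat_colProj_le hπ' hq hπ,
      fun π hπ hmin => eq_colProj_of_KLmat_le hπ' hq hπ (hmin _ hcol)⟩⟩

/-- closed form of the KL projection onto a row-marginal constraint set
`C₁ = {π ≥ 0 : π·1 = p}` and onto a column-marginal constraint set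
`C₂ = {π ≥ 0 : πᵀ·1 = q}`. -/
theorem kl_projection_closed_form
    (n : ℕ) (hn : 2 ≤ n) (π' : Matrix (Fin n) (Fin n) ℝ)
    (hπ' : ∀ i j, 0 < π' i j)
    (p : Fin n → ℝ) (hp : ∀ i, 0 < p i)
    (q : Fin n → ℝ) (hq : ∀ j, 0 < q j) :
    (((∀ i j, (0:ℝ) ≤ p i * π' i j / (∑ k, π' i k)) ∧
        (∀ i, ∑ j, p i * π' i j / (∑ k, π' i k) = p i)) ∧
      (∀ π : Matrix (Fin n) (Fin n) ℝ,
        ((∀ i j, 0 ≤ π i j) ∧ (∀ i, ∑ j, π i j = p i)) →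
        KLmat n (Matrix.of fun i j => p i * π' i j / (∑ k, π' i k)) π' ≤ KLmat n π π') ∧
      (∀ π : Matrix (Fin n) (Fin n) ℝ,
        ((∀ i j, 0 ≤ π i j) ∧ (∀ i, ∑ j, π i j = p i)) →
        (∀ τ : Matrix (Fin n) (Fin n) ℝ,
          ((∀ i j, 0 ≤ τ i j) ∧ (∀ i, ∑ j, τ i j = p i)) → KLmat n π π' ≤ KLmat n τ π') →
        π = Matrix.of fun i j => p i * π' i j / (∑ k, π' i k)))
    ∧
    (((∀ i j, (0:ℝ) ≤ q j * π' i j / (∑ k, π' k j)) ∧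
        (∀ j, ∑ i, q j * π' i j / (∑ k, π' k j) = q j)) ∧
      (∀ π : Matrix (Fin n) (Fin n) ℝ,
        ((∀ i j, 0 ≤ π i j) ∧ (∀ j, ∑ i, π i j = q j)) →
        KLmat n (Matrix.of fun i j => q j * π' i j / (∑ k, π' k j)) π' ≤ KLmat n π π') ∧
      (∀ π : Matrix (Fin n) (Fin n) ℝ,
        ((∀ i j, 0 ≤ π i j) ∧ (∀ j, ∑ i, π i j = q j)) →
        (∀ τ : Matrix (Fin n) (Fin n) ℝ,
          ((∀ i j, 0 ≤ τ i j) ∧ (∀ j, ∑ i, τ i j = q j)) → KLmat n π π' ≤ KLmat n τ π') →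
        π = Matrix.of fun i j => q j * π' i j / (∑ k, π' k j))) :=
  kl_projection_closed_form_general n π' hπ' p hp q hq
end

section
/- Convergence rate of Sinkhorn's algorithm: let p, q ∈ S_n(1) have strictly positive entries and γ > 0. Define the Sinkhorn iterates by u⁰ = v⁰ = 0 and, for t ≥ 0: if t is even, u^{t+1} = u^t + ln p − ln(B(u^t,v^t)·1) and v^{t+1} = v^t; if t is odd, u^{t+1} = u^t and v^{t+1} = v^t + ln q − ln(B(u^t,v^t)^T·1). Then for every t > 2, ‖B(u^t,v^t)·1 − p‖₁ + ‖B(u^t,v^t)^T·1 − q‖₁ ≤ 4R/(t−2), where R := ‖C‖_∞/γ − ln(min{min_i p_i, min_j q_j}). -/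
open Finset

/-- `B(u,v)ᵢⱼ = exp(uᵢ + vⱼ − Cᵢⱼ/γ)`. -/
noncomputable def Bmat (n : ℕ) (C : Matrix (Fin n) (Fin n) ℝ) (γ : ℝ)
    (u v : Fin n → ℝ) : Matrix (Fin n) (Fin n) ℝ :=
  Matrix.of fun i j => Real.exp (u i + v j - C i j / γ)

/-!
Sinkhorn's updates minimise the convex potential `Φ(u, v) = ∑ᵢⱼ B(u, v)ᵢⱼ - ⟨u, p⟩ - ⟨v, q⟩`
exactly in `u` and in `v` in turn. After an update one marginal of `B` is exact, so the marginal
error `E` is the `ℓ₁` distance of the other one, and the next update lowers `Φ` by the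
Kullback–Leibler divergence of that marginal, which is at least `E² / 2` by Pinsker's inequality;
moreover `E` does not increase. Each update also leaves the updated vector with oscillation at
most `R`, and convexity of `exp` then gives `Φₛ - Φₜ ≤ R Eₛ`. For the gap `δₖ = Φₖ - Φₜ` this
yields `δₖ - δₖ₊₁ ≥ δₖ² / (2R²)`, hence `δₖ ≤ 2R² / (k + 1)`, while `δₖ ≥ (t - k) Eₜ² / 2`;
taking `k = t / 2` gives `Eₜ ≤ 4R / t` (with time counted from step 2).
-/

open Real Matrix

theorem sub_one_mul_div_le_log_of_pos {t : ℝ} (ht : 0 < t) :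
    (t - 1) * (5 * t + 1) / (2 * t * (t + 2)) ≤ log t := by
  set h : ℝ → ℝ := fun s => log s - (s - 1) * (5 * s + 1) / (2 * s * (s + 2))
  have hderiv : ∀ x ∈ Set.Ioi (0 : ℝ), HasDerivAt h ((x - 1) ^ 3 / (x ^ 2 * (x + 2) ^ 2)) x := by
    intro x (hx : 0 < x)
    have hnum := ((hasDerivAt_id' x).sub_const 1).fun_mul
      (((hasDerivAt_id' x).const_mul 5).add_const 1)
    have hden := ((hasDerivAt_id' x).const_mul 2).fun_mul ((hasDerivAt_id' x).add_const 2)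
    refine ((hasDerivAt_log hx.ne').sub (hnum.fun_div hden (by positivity))).congr_deriv ?_
    field_simp
    ring
  have hcont : ContinuousOn h (Set.Ioi 0) :=
    fun x hx => (hderiv x hx).continuousAt.continuousWithinAt
  have h1 : h 1 = 0 := by norm_num [h]
  suffices 0 ≤ h t by simpa [h] using this
  rcases le_total 1 t with h1t | ht1
  · have hmono : MonotoneOn h (Set.Ici 1) :=
      monotoneOn_of_hasDerivWithinAt_nonneg (convex_Ici 1)
        (hcont.mono fun x (hx : 1 ≤ x) => show 0 < x by linarith)
        (fun x hx => (hderiv x (by simp at hx ⊢; linarith)).hasDerivWithinAt)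
        (fun x hx => by
          simp only [interior_Ici, Set.mem_Ioi] at hx
          have : 0 ≤ x - 1 := by linarith
          positivity)
    exact h1 ▸ hmono Set.self_mem_Ici h1t h1t
  · have hanti : AntitoneOn h (Set.Ioc 0 1) :=
      antitoneOn_of_hasDerivWithinAt_nonpos (convex_Ioc 0 1)
        (hcont.mono Set.Ioc_subset_Ioi_self)
        (fun x hx => (hderiv x (by simp at hx ⊢; linarith)).hasDerivWithinAt)
        (fun x hx => by
          simp only [interior_Ioc, Set.mem_Ioo] at hx
          exact div_nonpos_of_nonpos_of_nonneg
            (by nlinarith [pow_two_nonneg (x - 1)]) (by positivity))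
    exact h1 ▸ hanti ⟨ht, ht1⟩ ⟨one_pos, le_rfl⟩ ht1

theorem three_mul_sq_div_le_mul_log_sub_add_one {t : ℝ} (ht : 0 < t) :
    3 * (t - 1) ^ 2 / (2 * t + 4) ≤ t * log t - t + 1 := by
  have key := mul_le_mul_of_nonneg_left (sub_one_mul_div_le_log_of_pos ht) ht.le
  have e : t * ((t - 1) * (5 * t + 1) / (2 * t * (t + 2)))
      = 3 * (t - 1) ^ 2 / (2 * t + 4) + (t - 1) := by
    field_simp; ring
  linarith

theorem sq_sum_abs_sub_le_two_mul_sum_mul_log_div {ι : Type*} [Fintype ι] {p r : ι → ℝ}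
    (hp : ∀ i, 0 < p i) (hr : ∀ i, 0 < r i) (hp1 : ∑ i, p i = 1) (hr1 : ∑ i, r i = 1) :
    (∑ i, |p i - r i|) ^ 2 ≤ 2 * ∑ i, p i * log (p i / r i) := by
  have hw : ∀ i ∈ univ, 0 < 2 * p i + 4 * r i := fun i _ => by linarith [hp i, hr i]
  have hpoint : ∀ i, 3 * ((p i - r i) ^ 2 / (2 * p i + 4 * r i))
      ≤ p i * log (p i / r i) - p i + r i := by
    intro i
    have hscaled := mul_le_mul_of_nonneg_left
      (three_mul_sq_div_le_mul_log_sub_add_one (div_pos (hp i) (hr i))) (hr i).le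
    have hr0 := (hr i).ne'
    have hd' : 2 * p i + 4 * r i ≠ 0 := (hw i (mem_univ i)).ne'
    have e1 : r i * (3 * (p i / r i - 1) ^ 2 / (2 * (p i / r i) + 4))
        = 3 * ((p i - r i) ^ 2 / (2 * p i + 4 * r i)) := by
      field_simp
    have e2 : r i * (p i / r i * log (p i / r i) - p i / r i + 1)
        = p i * log (p i / r i) - p i + r i := by
      field_simp
    linarith
  have hsum : ∑ i, (2 * p i + 4 * r i) = 6 := by
    rw [sum_add_distrib, ← mul_sum, ← mul_sum, hp1, hr1]; norm_num
  have hcs := sq_sum_div_le_sum_sq_div univ (fun i => |p i - r i|) hw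
  simp only [sq_abs, hsum] at hcs
  have := sum_le_sum fun i (_ : i ∈ univ) => hpoint i
  rw [sum_add_distrib, sum_sub_distrib, hp1, hr1, ← mul_sum] at this
  linarith

theorem sum_mul_le_of_sum_eq_zero {ι : Type*} [Fintype ι] {x y : ι → ℝ} {K : ℝ}
    (hx : ∑ i, x i = 0) (hy : ∀ i k, y i - y k ≤ 2 * K) :
    ∑ i, x i * y i ≤ K * ∑ i, |x i| := by
  cases isEmpty_or_nonempty ι
  · simp
  obtain ⟨i₀, -, hi₀⟩ := exists_max_image univ y univ_nonempty
  have hc : ∀ i, |y i - (y i₀ - K)| ≤ K := fun i =>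
    abs_le.mpr ⟨by linarith [hy i₀ i], by linarith [hi₀ i (mem_univ i), hy i₀ i]⟩
  calc ∑ i, x i * y i = ∑ i, x i * (y i - (y i₀ - K)) := by
        simp only [mul_sub, sum_sub_distrib, ← sum_mul, hx, zero_mul, sub_zero]
    _ ≤ ∑ i, |x i| * K := sum_le_sum fun i _ =>
        (le_abs_self _).trans ((abs_mul _ _).trans_le
          (mul_le_mul_of_nonneg_left (hc i) (abs_nonneg _)))
    _ = K * ∑ i, |x i| := by rw [← sum_mul, mul_comm]

theorem exp_sub_exp_le_exp_mul_sub (a b : ℝ) : exp a - exp b ≤ exp a * (a - b) := by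
  have := mul_le_mul_of_nonneg_left (add_one_le_exp (b - a)) (exp_pos a).le
  rw [← exp_add, add_sub_cancel] at this
  linarith

theorem mul_add_one_le_of_sq_le_mul_sub {d d' c x : ℝ} (hd' : 0 ≤ d') (hdd' : d' ≤ d)
    (hsq : d ^ 2 ≤ c * (d - d')) (ih : d * x ≤ c) : d' * (x + 1) ≤ c := by
  rcases hdd'.lt_or_eq with hlt | rfl
  · have hd : 0 < d := hd'.trans_lt hlt
    refine le_of_mul_le_mul_left ?_ hd
    nlinarith
  · nlinarith

section DescentRate

variable {Φ E : ℕ → ℝ} {R : ℝ}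

theorem mul_sq_div_two_le_sub_of_descent (hdesc : ∀ k, E k ^ 2 / 2 ≤ Φ k - Φ (k + 1))
    (hE : Antitone E) (hE0 : ∀ k, 0 ≤ E k) {k m : ℕ} (hkm : k ≤ m) :
    (m - k : ℝ) * E m ^ 2 / 2 ≤ Φ k - Φ m := by
  induction m, hkm using Nat.le_induction with
  | base => simp
  | succ m hkm ih =>
    have hsq : E (m + 1) ^ 2 ≤ E m ^ 2 := pow_le_pow_left₀ (hE0 _) (hE m.le_succ) 2
    have hmk : (0 : ℝ) ≤ m - k := by rw [sub_nonneg]; exact_mod_cast hkm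
    push_cast
    nlinarith [hdesc m, mul_le_mul_of_nonneg_left hsq hmk]

theorem sub_mul_add_one_le_of_descent (hR : 0 ≤ R)
    (hdesc : ∀ k, E k ^ 2 / 2 ≤ Φ k - Φ (k + 1))
    (hgap : ∀ k m, Φ k - Φ m ≤ R * E k) {k m : ℕ} (hkm : k ≤ m) :
    (Φ k - Φ m) * (k + 1) ≤ 2 * R ^ 2 := by
  have hΦ : Antitone Φ := antitone_nat_of_succ_le fun k => by nlinarith [hdesc k]
  induction k with
  | zero =>
    have hE : E 0 ≤ 2 * R := by nlinarith [hdesc 0, hgap 0 1]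
    simp only [Nat.cast_zero, zero_add, mul_one]
    nlinarith [hgap 0 m, mul_le_mul_of_nonneg_left hE hR]
  | succ k ih =>
    push_cast
    refine mul_add_one_le_of_sq_le_mul_sub (sub_nonneg.mpr (hΦ hkm))
      (by linarith [hΦ k.le_succ]) ?_ (ih (by omega))
    have hd : 0 ≤ Φ k - Φ m := sub_nonneg.mpr (hΦ (by omega))
    have := pow_le_pow_left₀ hd (hgap k m) 2
    nlinarith [hdesc k]

theorem mul_le_of_descent (hR : 0 ≤ R) (hdesc : ∀ k, E k ^ 2 / 2 ≤ Φ k - Φ (k + 1))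
    (hE : Antitone E) (hgap : ∀ k m, Φ k - Φ m ≤ R * E k) (m : ℕ) :
    E m * m ≤ 4 * R := by
  have hE0 : ∀ k, 0 ≤ E k := fun k => by nlinarith [hdesc k, hgap k (k + 1)]
  have h1 := mul_sq_div_two_le_sub_of_descent hdesc hE hE0 (Nat.div_le_self m 2)
  have h2 := sub_mul_add_one_le_of_descent hR hdesc hgap (Nat.div_le_self m 2)
  have hhalf : (m : ℝ) ^ 2 / 4 ≤ (m - (m / 2 : ℕ)) * ((m / 2 : ℕ) + 1) := by
    rcases Nat.even_or_odd' m with ⟨k, rfl | rfl⟩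
    · rw [show 2 * k / 2 = k by omega]; push_cast; nlinarith
    · rw [show (2 * k + 1) / 2 = k by omega]; push_cast; nlinarith
  have hsq : (E m * m) ^ 2 ≤ (4 * R) ^ 2 := by
    nlinarith [mul_le_mul_of_nonneg_left hhalf (sq_nonneg (E m)),
      mul_le_mul_of_nonneg_right h1 (by positivity : (0 : ℝ) ≤ (m / 2 : ℕ) + 1)]
  exact (pow_le_pow_iff_left₀ (mul_nonneg (hE0 m) m.cast_nonneg) (by positivity)
    two_ne_zero).mp hsq

end DescentRate

namespace Sinkhorn

variable {n : ℕ} (C : Matrix (Fin n) (Fin n) ℝ) (γ : ℝ)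

noncomputable def rowSum (u v : Fin n → ℝ) (i : Fin n) : ℝ := ∑ j, Bmat n C γ u v i j

noncomputable def colSum (u v : Fin n → ℝ) (j : Fin n) : ℝ := ∑ i, Bmat n C γ u v i j

noncomputable def rowScaling (p u v : Fin n → ℝ) : Fin n → ℝ :=
  fun i => u i + log (p i) - log (rowSum C γ u v i)

noncomputable def colScaling (q u v : Fin n → ℝ) : Fin n → ℝ :=
  fun j => v j + log (q j) - log (colSum C γ u v j)

noncomputable def potential (p q u v : Fin n → ℝ) : ℝ :=
  ∑ i, rowSum C γ u v i - ∑ i, u i * p i - ∑ j, v j * q j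

noncomputable def marginalError (p q u v : Fin n → ℝ) : ℝ :=
  ∑ i, |rowSum C γ u v i - p i| + ∑ j, |colSum C γ u v j - q j|

structure IsSinkhorn (p q : Fin n → ℝ) (u v : ℕ → Fin n → ℝ) : Prop where
  even : ∀ t, t % 2 = 0 → u (t + 1) = rowScaling C γ p (u t) (v t) ∧ v (t + 1) = v t
  odd : ∀ t, t % 2 = 1 → u (t + 1) = u t ∧ v (t + 1) = colScaling C γ q (u t) (v t)

variable {C γ} {p q : Fin n → ℝ}

theorem Bmat_pos (u v : Fin n → ℝ) (i j : Fin n) : 0 < Bmat n C γ u v i j :=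
  exp_pos _

theorem rowSum_pos (u v : Fin n → ℝ) (i : Fin n) : 0 < rowSum C γ u v i :=
  sum_pos (fun j _ => Bmat_pos u v i j) ⟨i, mem_univ i⟩

theorem sum_colSum (u v : Fin n → ℝ) : ∑ j, colSum C γ u v j = ∑ i, rowSum C γ u v i :=
  sum_comm

theorem Bmat_transpose (u v : Fin n → ℝ) : Bmat n Cᵀ γ v u = (Bmat n C γ u v)ᵀ := by
  ext i j
  simp only [Bmat, Matrix.of_apply, Matrix.transpose_apply, add_comm]

theorem rowSum_transpose (u v : Fin n → ℝ) : rowSum Cᵀ γ v u = colSum C γ u v := by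
  ext j
  simp only [rowSum, colSum, Bmat_transpose, Matrix.transpose_apply]

theorem colSum_transpose (u v : Fin n → ℝ) : colSum Cᵀ γ v u = rowSum C γ u v := by
  ext i
  simp only [rowSum, colSum, Bmat_transpose, Matrix.transpose_apply]

theorem rowScaling_transpose (q u v : Fin n → ℝ) :
    rowScaling Cᵀ γ q v u = colScaling C γ q u v := by
  ext j
  simp only [rowScaling, colScaling, rowSum_transpose]

theorem potential_transpose (u v : Fin n → ℝ) :
    potential Cᵀ γ q p v u = potential C γ p q u v := by
  simp only [potential, rowSum_transpose, sum_colSum]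
  ring

theorem marginalError_transpose (u v : Fin n → ℝ) :
    marginalError Cᵀ γ q p v u = marginalError C γ p q u v := by
  simp only [marginalError, rowSum_transpose, colSum_transpose]
  ring

theorem Bmat_rowScaling (hp : ∀ i, 0 < p i) (u v : Fin n → ℝ) (i j : Fin n) :
    Bmat n C γ (rowScaling C γ p u v) v i j = Bmat n C γ u v i j * (p i / rowSum C γ u v i) := by
  simp only [Bmat, rowScaling, Matrix.of_apply]
  have hr := rowSum_pos (C := C) (γ := γ) u v i
  rw [← exp_log (div_pos (hp i) hr), ← exp_add, log_div (hp i).ne' hr.ne']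
  ring_nf

theorem rowSum_rowScaling (hp : ∀ i, 0 < p i) (u v : Fin n → ℝ) :
    rowSum C γ (rowScaling C γ p u v) v = p := by
  ext i
  simp only [rowSum, Bmat_rowScaling hp, ← sum_mul]
  exact mul_div_cancel₀ (p i) (rowSum_pos u v i).ne'

theorem potential_sub_potential_rowScaling (hp : ∀ i, 0 < p i) {u v : Fin n → ℝ}
    (hmass : ∑ i, rowSum C γ u v i = ∑ i, p i) :
    potential C γ p q u v - potential C γ p q (rowScaling C γ p u v) v
      = ∑ i, p i * log (p i / rowSum C γ u v i) := by
  have h : ∀ i, p i * log (p i / rowSum C γ u v i) = (rowScaling C γ p u v i - u i) * p i :=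
    fun i => by
      rw [log_div (hp i).ne' (rowSum_pos u v i).ne']
      simp only [rowScaling]
      ring
  simp only [potential, rowSum_rowScaling hp, hmass, h, sub_mul, sum_sub_distrib]
  ring

theorem marginalError_rowScaling_le (hp : ∀ i, 0 < p i) {u v : Fin n → ℝ}
    (hq : colSum C γ u v = q) :
    marginalError C γ p q (rowScaling C γ p u v) v ≤ marginalError C γ p q u v := by
  subst hq
  have hcol : ∀ j, colSum C γ (rowScaling C γ p u v) v j - colSum C γ u v j
      = ∑ i, Bmat n C γ u v i j * (p i / rowSum C γ u v i - 1) := fun j => by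
    simp only [colSum, Bmat_rowScaling hp, mul_sub, mul_one, sum_sub_distrib]
  have hrow : ∀ i, rowSum C γ u v i * |p i / rowSum C γ u v i - 1| = |rowSum C γ u v i - p i| :=
    fun i => by
      have hr := rowSum_pos (C := C) (γ := γ) u v i
      rw [← abs_of_pos hr, ← abs_mul, abs_of_pos hr, mul_sub, mul_div_cancel₀ _ hr.ne',
        mul_one, abs_sub_comm]
  simp only [marginalError, rowSum_rowScaling hp, sub_self, abs_zero, sum_const_zero, zero_add,
    add_zero, hcol]
  calc ∑ j, |∑ i, Bmat n C γ u v i j * (p i / rowSum C γ u v i - 1)|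
      ≤ ∑ j, ∑ i, Bmat n C γ u v i j * |p i / rowSum C γ u v i - 1| :=
        sum_le_sum fun j _ => (abs_sum_le_sum_abs _ _).trans_eq <| sum_congr rfl fun i _ => by
          rw [abs_mul, abs_of_pos (Bmat_pos u v i j)]
    _ = ∑ i, rowSum C γ u v i * |p i / rowSum C γ u v i - 1| := by
        rw [sum_comm]
        simp only [rowSum, sum_mul]
    _ = ∑ i, |rowSum C γ u v i - p i| := sum_congr rfl fun i _ => hrow i

theorem sq_marginalError_div_two_le_potential_sub (hp : ∀ i, 0 < p i) (hp1 : ∑ i, p i = 1)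
    (hq1 : ∑ j, q j = 1) {u v : Fin n → ℝ} (hq : colSum C γ u v = q) :
    marginalError C γ p q u v ^ 2 / 2
      ≤ potential C γ p q u v - potential C γ p q (rowScaling C γ p u v) v := by
  have hmass : ∑ i, rowSum C γ u v i = 1 := by rw [← sum_colSum, hq, hq1]
  rw [potential_sub_potential_rowScaling hp (hmass.trans hp1.symm)]
  have hpinsker := sq_sum_abs_sub_le_two_mul_sum_mul_log_div hp (rowSum_pos u v) hp1 hmass
  simp only [marginalError, hq, sub_self, abs_zero, sum_const_zero, add_zero]
  rw [sum_congr rfl fun i _ => abs_sub_comm (rowSum C γ u v i) (p i)]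
  linarith

theorem rowSum_eq_exp_mul (u v : Fin n → ℝ) (i : Fin n) :
    rowSum C γ u v i = exp (u i) * rowSum C γ 0 v i := by
  simp only [rowSum, Bmat, Matrix.of_apply, mul_sum, ← exp_add, Pi.zero_apply, zero_add]
  exact sum_congr rfl fun j _ => congrArg exp (by ring)

theorem rowScaling_sub_rowScaling_le {K μ : ℝ} (hγ : 0 < γ) (hC : ∀ i j, 0 ≤ C i j)
    (hCK : ∀ i j, C i j ≤ K) (hp1 : ∑ i, p i = 1) (hμ : 0 < μ) (hμp : ∀ i, μ ≤ p i)
    (u v : Fin n → ℝ) (i k : Fin n) :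
    rowScaling C γ p u v i - rowScaling C γ p u v k ≤ K / γ - log μ := by
  have hp : ∀ i, 0 < p i := fun i => hμ.trans_le (hμp i)
  have hS : rowSum C γ 0 v k ≤ exp (K / γ) * rowSum C γ 0 v i := by
    simp only [rowSum, mul_sum, Bmat, Matrix.of_apply, ← exp_add, Pi.zero_apply]
    gcongr with j
    have := div_le_div_of_nonneg_right (hCK i j) hγ.le
    have := div_nonneg (hC k j) hγ.le
    linarith
  have hlog : log (rowSum C γ 0 v k) ≤ K / γ + log (rowSum C γ 0 v i) := by
    have := log_le_log (rowSum_pos 0 v k) hS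
    rwa [log_mul (exp_ne_zero _) (rowSum_pos 0 v i).ne', log_exp] at this
  have hpi : log (p i) ≤ 0 :=
    log_nonpos (hp i).le (hp1 ▸ single_le_sum (fun j _ => (hp j).le) (mem_univ i))
  have hpk : log μ ≤ log (p k) := log_le_log hμ (hμp k)
  simp only [rowScaling, rowSum_eq_exp_mul u v, log_mul (exp_ne_zero _) (rowSum_pos _ _ _).ne',
    log_exp]
  linarith

theorem sum_rowSum_sub_sum_rowSum_le (u v u' v' : Fin n → ℝ) :
    ∑ i, rowSum C γ u v i - ∑ i, rowSum C γ u' v' i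
      ≤ ∑ i, (u i - u' i) * rowSum C γ u v i + ∑ j, (v j - v' j) * colSum C γ u v j := by
  have hexp : ∀ i j, Bmat n C γ u v i j - Bmat n C γ u' v' i j
      ≤ (u i - u' i) * Bmat n C γ u v i j + (v j - v' j) * Bmat n C γ u v i j := fun i j => by
    have := exp_sub_exp_le_exp_mul_sub (u i + v j - C i j / γ) (u' i + v' j - C i j / γ)
    simp only [Bmat, Matrix.of_apply]
    linarith
  calc ∑ i, rowSum C γ u v i - ∑ i, rowSum C γ u' v' i
      = ∑ i, ∑ j, (Bmat n C γ u v i j - Bmat n C γ u' v' i j) := by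
        simp only [rowSum, sum_sub_distrib]
    _ ≤ ∑ i, ∑ j, ((u i - u' i) * Bmat n C γ u v i j + (v j - v' j) * Bmat n C γ u v i j) :=
        sum_le_sum fun i _ => sum_le_sum fun j _ => hexp i j
    _ = ∑ i, (u i - u' i) * rowSum C γ u v i + ∑ j, (v j - v' j) * colSum C γ u v j := by
        simp only [sum_add_distrib, rowSum, colSum, mul_sum]
        rw [sum_comm (f := fun i j => (v j - v' j) * Bmat n C γ u v i j)]

theorem potential_sub_potential_le {R : ℝ} (hp1 : ∑ i, p i = 1) (hq1 : ∑ j, q j = 1)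
    {u v u' v' : Fin n → ℝ} (hmass : ∑ i, rowSum C γ u v i = 1)
    (hu : ∀ i k, u i - u k ≤ R) (hu' : ∀ i k, u' i - u' k ≤ R)
    (hv : ∀ j l, v j - v l ≤ R) (hv' : ∀ j l, v' j - v' l ≤ R) :
    potential C γ p q u v - potential C γ p q u' v' ≤ R * marginalError C γ p q u v := by
  have hrow := sum_mul_le_of_sum_eq_zero (x := fun i => rowSum C γ u v i - p i)
    (y := fun i => u i - u' i) (K := R) (by rw [sum_sub_distrib, hmass, hp1, sub_self])
    (fun i k => by linarith [hu i k, hu' k i])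
  have hcol := sum_mul_le_of_sum_eq_zero (x := fun j => colSum C γ u v j - q j)
    (y := fun j => v j - v' j) (K := R)
    (by rw [sum_sub_distrib, sum_colSum, hmass, hq1, sub_self])
    (fun j l => by linarith [hv j l, hv' l j])
  have hexp := sum_rowSum_sub_sum_rowSum_le (C := C) (γ := γ) u v u' v'
  have e : ∀ (x x' r s : Fin n → ℝ), ∑ i, (r i - s i) * (x i - x' i)
      = ∑ i, (x i - x' i) * r i - (∑ i, x i * s i - ∑ i, x' i * s i) := fun x x' r s => by
    rw [← sum_sub_distrib, ← sum_sub_distrib]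
    exact sum_congr rfl fun i _ => by ring
  rw [e] at hrow hcol
  simp only [potential, marginalError, mul_add]
  linarith

namespace IsSinkhorn

variable {u v : ℕ → Fin n → ℝ}

-- A column update is a row update of the transposed problem, one time step later.
theorem transpose (hS : IsSinkhorn C γ p q u v) :
    IsSinkhorn Cᵀ γ q p (fun t => v (t + 1)) (fun t => u (t + 1)) where
  even t ht := by
    obtain ⟨hu, hv⟩ := hS.odd (t + 1) (by omega)
    exact ⟨hv.trans (rowScaling_transpose q _ _).symm, hu⟩
  odd t ht := by
    obtain ⟨hu, hv⟩ := hS.even (t + 1) (by omega)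
    refine ⟨hv, hu.trans ?_⟩
    rw [← rowScaling_transpose, transpose_transpose]

theorem rowSum_eq (hS : IsSinkhorn C γ p q u v) (hp : ∀ i, 0 < p i) {t : ℕ} (ht : t % 2 = 1) :
    rowSum C γ (u t) (v t) = p := by
  obtain ⟨s, rfl⟩ : ∃ s, t = s + 1 := ⟨t - 1, by omega⟩
  obtain ⟨hu, hv⟩ := hS.even s (by omega)
  rw [hu, hv, rowSum_rowScaling hp]

theorem colSum_eq (hS : IsSinkhorn C γ p q u v) (hq : ∀ j, 0 < q j) {t : ℕ} (ht : t % 2 = 0)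
    (ht0 : t ≠ 0) : colSum C γ (u t) (v t) = q := by
  obtain ⟨s, rfl⟩ : ∃ s, t = s + 1 := ⟨t - 1, by omega⟩
  rw [← rowSum_transpose]
  exact hS.transpose.rowSum_eq hq (by omega)

theorem sum_rowSum (hS : IsSinkhorn C γ p q u v) (hp : ∀ i, 0 < p i) (hq : ∀ j, 0 < q j)
    (hp1 : ∑ i, p i = 1) (hq1 : ∑ j, q j = 1) {t : ℕ} (ht0 : t ≠ 0) :
    ∑ i, rowSum C γ (u t) (v t) i = 1 := by
  rcases Nat.mod_two_eq_zero_or_one t with ht | ht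
  · rw [← sum_colSum, hS.colSum_eq hq ht ht0, hq1]
  · rw [hS.rowSum_eq hp ht, hp1]

theorem descent_of_even (hS : IsSinkhorn C γ p q u v) (hp : ∀ i, 0 < p i) (hq : ∀ j, 0 < q j)
    (hp1 : ∑ i, p i = 1) (hq1 : ∑ j, q j = 1) {t : ℕ} (ht : t % 2 = 0) (ht0 : t ≠ 0) :
    marginalError C γ p q (u t) (v t) ^ 2 / 2
        ≤ potential C γ p q (u t) (v t) - potential C γ p q (u (t + 1)) (v (t + 1)) ∧
      marginalError C γ p q (u (t + 1)) (v (t + 1)) ≤ marginalError C γ p q (u t) (v t) := by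
  obtain ⟨hu, hv⟩ := hS.even t ht
  have hc := hS.colSum_eq hq ht ht0
  rw [hu, hv]
  exact ⟨sq_marginalError_div_two_le_potential_sub hp hp1 hq1 hc,
    marginalError_rowScaling_le hp hc⟩

theorem descent (hS : IsSinkhorn C γ p q u v) (hp : ∀ i, 0 < p i) (hq : ∀ j, 0 < q j)
    (hp1 : ∑ i, p i = 1) (hq1 : ∑ j, q j = 1) {t : ℕ} (ht : 2 ≤ t) :
    marginalError C γ p q (u t) (v t) ^ 2 / 2
        ≤ potential C γ p q (u t) (v t) - potential C γ p q (u (t + 1)) (v (t + 1)) ∧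
      marginalError C γ p q (u (t + 1)) (v (t + 1)) ≤ marginalError C γ p q (u t) (v t) := by
  rcases Nat.mod_two_eq_zero_or_one t with h | h
  · exact hS.descent_of_even hp hq hp1 hq1 h (by omega)
  · obtain ⟨s, rfl⟩ : ∃ s, t = s + 1 := ⟨t - 1, by omega⟩
    have := hS.transpose.descent_of_even hq hp hq1 hp1 (t := s) (by omega) (by omega)
    simpa only [potential_transpose, marginalError_transpose] using this

theorem u_sub_le (hS : IsSinkhorn C γ p q u v) {R : ℝ}
    (hosc : ∀ x y i k, rowScaling C γ p x y i - rowScaling C γ p x y k ≤ R) {t : ℕ}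
    (ht0 : t ≠ 0) (i k : Fin n) : u t i - u t k ≤ R := by
  obtain ⟨s, rfl⟩ : ∃ s, t = s + 1 := ⟨t - 1, by omega⟩
  rcases Nat.mod_two_eq_zero_or_one s with hs | hs
  · rw [(hS.even s hs).1]
    exact hosc _ _ i k
  · obtain ⟨r, rfl⟩ : ∃ r, s = r + 1 := ⟨s - 1, by omega⟩
    rw [(hS.odd (r + 1) hs).1, (hS.even r (by omega)).1]
    exact hosc _ _ i k

theorem v_sub_le (hS : IsSinkhorn C γ p q u v) {R : ℝ}
    (hosc : ∀ x y j l, rowScaling Cᵀ γ q x y j - rowScaling Cᵀ γ q x y l ≤ R) {t : ℕ}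
    (ht : 2 ≤ t) (j l : Fin n) : v t j - v t l ≤ R := by
  obtain ⟨s, rfl⟩ : ∃ s, t = s + 1 := ⟨t - 1, by omega⟩
  exact hS.transpose.u_sub_le hosc (t := s) (by omega) j l

theorem marginalError_mul_le (hS : IsSinkhorn C γ p q u v) (hp : ∀ i, 0 < p i)
    (hq : ∀ j, 0 < q j) (hp1 : ∑ i, p i = 1) (hq1 : ∑ j, q j = 1) {R : ℝ} (hR : 0 ≤ R)
    (hoscp : ∀ x y i k, rowScaling C γ p x y i - rowScaling C γ p x y k ≤ R)
    (hoscq : ∀ x y j l, rowScaling Cᵀ γ q x y j - rowScaling Cᵀ γ q x y l ≤ R)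
    {t : ℕ} (ht : 2 ≤ t) :
    marginalError C γ p q (u t) (v t) * (t - 2) ≤ 4 * R := by
  obtain ⟨m, rfl⟩ : ∃ m, t = m + 2 := ⟨t - 2, by omega⟩
  have := mul_le_of_descent (Φ := fun k => potential C γ p q (u (k + 2)) (v (k + 2)))
    (E := fun k => marginalError C γ p q (u (k + 2)) (v (k + 2))) hR
    (fun k => (hS.descent hp hq hp1 hq1 (by omega : 2 ≤ k + 2)).1)
    (antitone_nat_of_succ_le fun k => (hS.descent hp hq hp1 hq1 (by omega : 2 ≤ k + 2)).2)
    (fun k m => potential_sub_potential_le hp1 hq1 (hS.sum_rowSum hp hq hp1 hq1 (by omega))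
      (hS.u_sub_le hoscp (by omega)) (hS.u_sub_le hoscp (by omega))
      (hS.v_sub_le hoscq (by omega)) (hS.v_sub_le hoscq (by omega))) m
  push_cast
  simpa using this

end IsSinkhorn

end Sinkhorn

open Sinkhorn in
theorem sinkhorn_convergence_rate_general
    (n : ℕ) (C : Matrix (Fin n) (Fin n) ℝ)
    (hC : ∀ i j, 0 ≤ C i j) (γ : ℝ) (hγ : 0 < γ)
    (p q : Fin n → ℝ)
    (hp : (∀ i, 0 ≤ p i) ∧ ∑ i, p i = 1) (hppos : ∀ i, 0 < p i)
    (hq : (∀ i, 0 ≤ q i) ∧ ∑ i, q i = 1) (hqpos : ∀ i, 0 < q i)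
    (u v : ℕ → Fin n → ℝ)
    (heven : ∀ t : ℕ, t % 2 = 0 →
      u (t + 1) = (fun i => u t i + Real.log (p i)
          - Real.log (∑ j, Bmat n C γ (u t) (v t) i j)) ∧
      v (t + 1) = v t)
    (hodd : ∀ t : ℕ, t % 2 = 1 →
      u (t + 1) = u t ∧
      v (t + 1) = (fun j => v t j + Real.log (q j)
          - Real.log (∑ i, Bmat n C γ (u t) (v t) i j)))
    (R : ℝ)
    (hR : R = sSup (Set.range fun ij : Fin n × Fin n => C ij.1 ij.2) / γ
        - Real.log (min (sInf (Set.range p)) (sInf (Set.range q)))) :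
    ∀ t : ℕ, 2 < t →
      (∑ i, |(∑ j, Bmat n C γ (u t) (v t) i j) - p i|)
        + (∑ j, |(∑ i, Bmat n C γ (u t) (v t) i j) - q j|)
        ≤ 4 * R / ((t : ℝ) - 2) := by
  intro t ht
  have : Nonempty (Fin n) :=
    univ_nonempty_iff.mp (nonempty_of_sum_ne_zero (hp.2.symm ▸ one_ne_zero))
  have hCK : ∀ i j, C i j ≤ sSup (Set.range fun ij : Fin n × Fin n => C ij.1 ij.2) :=
    fun i j => le_csSup (Set.finite_range _).bddAbove ⟨(i, j), rfl⟩
  have hinf_pos : ∀ {r : Fin n → ℝ}, (∀ i, 0 < r i) → 0 < sInf (Set.range r) :=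
    fun {r} hr => by
    obtain ⟨i, hi⟩ := exists_eq_ciInf_of_finite (f := r)
    exact (hr i).trans_eq hi
  have hμ := lt_min (hinf_pos hppos) (hinf_pos hqpos)
  have hoscp := rowScaling_sub_rowScaling_le hγ hC hCK hp.2 hμ fun i =>
    (min_le_left _ _).trans (csInf_le (Set.finite_range p).bddBelow ⟨i, rfl⟩)
  have hoscq := rowScaling_sub_rowScaling_le (C := Cᵀ) hγ (fun i j => hC j i)
    (fun i j => hCK j i) hq.2 hμ fun j =>
    (min_le_right _ _).trans (csInf_le (Set.finite_range q).bddBelow ⟨j, rfl⟩)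
  rw [← hR] at hoscp hoscq
  have hR0 : 0 ≤ R :=
    (sub_self _).ge.trans (hoscp 0 0 (Classical.arbitrary _) (Classical.arbitrary _))
  have hrate := (IsSinkhorn.mk heven hodd).marginalError_mul_le hppos hqpos hp.2 hq.2 hR0
    hoscp hoscq ht.le
  have ht2 : (0 : ℝ) < t - 2 := sub_pos.mpr (by exact_mod_cast ht)
  exact (le_div_iff₀ ht2).mpr hrate

/-- convergence rate of Sinkhorn's algorithm: after `t > 2` iterations the
sum of `ℓ₁` errors of the marginals of `B(uᵗ,vᵗ)` is at most `4R/(t−2)`, with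
`R = ‖C‖_∞/γ − ln(min{minᵢ pᵢ, minⱼ qⱼ})`. -/
theorem sinkhorn_convergence_rate
    (n : ℕ) (hn : 2 ≤ n) (C : Matrix (Fin n) (Fin n) ℝ)
    (hC : ∀ i j, 0 ≤ C i j) (γ : ℝ) (hγ : 0 < γ)
    (p q : Fin n → ℝ)
    (hp : (∀ i, 0 ≤ p i) ∧ ∑ i, p i = 1) (hppos : ∀ i, 0 < p i)
    (hq : (∀ i, 0 ≤ q i) ∧ ∑ i, q i = 1) (hqpos : ∀ i, 0 < q i)
    (u v : ℕ → Fin n → ℝ) (hu0 : u 0 = 0) (hv0 : v 0 = 0)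
    (heven : ∀ t : ℕ, t % 2 = 0 →
      u (t + 1) = (fun i => u t i + Real.log (p i)
          - Real.log (∑ j, Bmat n C γ (u t) (v t) i j)) ∧
      v (t + 1) = v t)
    (hodd : ∀ t : ℕ, t % 2 = 1 →
      u (t + 1) = u t ∧
      v (t + 1) = (fun j => v t j + Real.log (q j)
          - Real.log (∑ i, Bmat n C γ (u t) (v t) i j)))
    (R : ℝ)
    (hR : R = sSup (Set.range fun ij : Fin n × Fin n => C ij.1 ij.2) / γ
        - Real.log (min (sInf (Set.range p)) (sInf (Set.range q)))) :
    ∀ t : ℕ, 2 < t →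
      (∑ i, |(∑ j, Bmat n C γ (u t) (v t) i j) - p i|)
        + (∑ j, |(∑ i, Bmat n C γ (u t) (v t) i j) - q j|)
        ≤ 4 * R / ((t : ℝ) - 2) :=
  sinkhorn_convergence_rate_general n C hC γ hγ p q hp hppos hq hqpos u v heven hodd R hR
end

section
/- Rounding onto the transportation polytope: let p, q ∈ S_n(1) and let π̌ ∈ ℝ^{n×n} have strictly positive entries with Σ_{i,j} π̌_{ij} = 1. Define P := diag(min(p_i/(π̌·1)_i, 1)), Q := diag(min(q_j/(π̌^T·1)_j, 1)), F := P π̌ Q, e_p := p − F·1, e_q := q − F^T·1, and π̂ := F + e_p e_q^T/‖e_p‖₁ if e_p ≠ 0, and π̂ := F otherwise. Then π̂ ∈ U(p,q) and ‖π̌ − π̂‖₁ ≤ ‖π̌·1 − p‖₁ + ‖π̌^T·1 − q‖₁. -/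
/-!
Write `a_i, b_j ∈ [0, 1]` for the diagonals of `P` and `Q`. Then `0 ≤ F ≤ π̌`, and `F` has row
sums `≤ p` and column sums `≤ q`, so `e_p, e_q ≥ 0` carry the same mass `δ = 1 - ∑ F = ‖π̌ - F‖₁`
and adding `e_p e_qᵀ / δ ≥ 0` repairs both marginals. Hence
`‖π̌ - π̂‖₁ ≤ ‖π̌ - F‖₁ + ‖π̂ - F‖₁ = 2δ`. Finally `1 - a_i b_j ≤ (1 - a_i) + (1 - b_j)` and
`(1 - a_i) (π̌ 1)_i = ((π̌ 1)_i - p_i)⁺`, so `δ` is at most the total positive part of `π̌ 1 - p`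
and `π̌ᵀ 1 - q`, which is half their `ℓ₁` norms since both vectors sum to zero.
-/

open Finset Matrix

lemma sum_abs_ne_zero {ι : Type*} [Fintype ι] {x : ι → ℝ} (h : x ≠ 0) : ∑ i, |x i| ≠ 0 :=
  fun hs => h <| funext fun i =>
    abs_eq_zero.1 ((sum_eq_zero_iff_of_nonneg fun _ _ => abs_nonneg _).1 hs i (mem_univ i))

lemma sum_abs_eq_two_mul_sum_posPart {ι : Type*} {s : Finset ι} {x : ι → ℝ}
    (h : ∑ i ∈ s, x i = 0) : ∑ i ∈ s, |x i| = 2 * ∑ i ∈ s, (x i)⁺ := by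
  have hx : ∀ i, |x i| = 2 * (x i)⁺ - x i := fun i => by
    linarith [posPart_add_negPart (x i), posPart_sub_negPart (x i)]
  rw [sum_congr rfl fun i _ => hx i, sum_sub_distrib, h, ← mul_sum, sub_zero]

lemma min_div_one_mul {a b : ℝ} (ha : 0 ≤ a) (hb : 0 ≤ b) : min (a / b) 1 * b = min a b := by
  rcases hb.eq_or_lt with rfl | hb
  · simp [ha]
  · rw [min_mul_of_nonneg _ _ hb.le, div_mul_cancel₀ _ hb.ne', one_mul]

namespace Matrix

variable {ι κ : Type*} [Fintype κ]

/-- The diagonal of the paper's `P`; that of `Q` is `Mᵀ.rowScaling q`. -/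
noncomputable def rowScaling (M : Matrix ι κ ℝ) (p : ι → ℝ) (i : ι) : ℝ :=
  min (p i / ∑ j, M i j) 1

noncomputable def rowDeficit (F : Matrix ι κ ℝ) (p : ι → ℝ) (i : ι) : ℝ := p i - ∑ j, F i j

section rowScaling

variable {M : Matrix ι κ ℝ} {p : ι → ℝ}

lemma rowScaling_nonneg (hM : ∀ i j, 0 ≤ M i j) (hp : ∀ i, 0 ≤ p i) (i : ι) :
    0 ≤ M.rowScaling p i :=
  le_min (div_nonneg (hp i) (sum_nonneg fun j _ => hM i j)) zero_le_one

lemma rowScaling_le_one (i : ι) : M.rowScaling p i ≤ 1 := min_le_right _ _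

lemma rowScaling_mul_sum (hM : ∀ i j, 0 ≤ M i j) (hp : ∀ i, 0 ≤ p i) (i : ι) :
    M.rowScaling p i * ∑ j, M i j = min (p i) (∑ j, M i j) :=
  min_div_one_mul (hp i) (sum_nonneg fun j _ => hM i j)

lemma rowScaling_mul_sum_le (hM : ∀ i j, 0 ≤ M i j) (hp : ∀ i, 0 ≤ p i) (i : ι) :
    M.rowScaling p i * ∑ j, M i j ≤ p i :=
  (rowScaling_mul_sum hM hp i).trans_le (min_le_left _ _)

lemma one_sub_rowScaling_mul_sum (hM : ∀ i j, 0 ≤ M i j) (hp : ∀ i, 0 ≤ p i) (i : ι) :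
    (1 - M.rowScaling p i) * ∑ j, M i j = (∑ j, M i j - p i)⁺ := by
  rw [sub_mul, one_mul, rowScaling_mul_sum hM hp, ← max_sub_sub_left, sub_self]
  rfl

end rowScaling

variable [Fintype ι]

/-- The paper's `F = P π̌ Q`. -/
noncomputable def shrinkToMarginals (M : Matrix ι κ ℝ) (p : ι → ℝ) (q : κ → ℝ) :
    Matrix ι κ ℝ :=
  of fun i j => M.rowScaling p i * M i j * Mᵀ.rowScaling q j

/-- The paper's `π̂`, with `e_p = F.rowDeficit p` and `e_q = Fᵀ.rowDeficit q`. -/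
noncomputable def completeMarginals (F : Matrix ι κ ℝ) (p : ι → ℝ) (q : κ → ℝ) :
    Matrix ι κ ℝ :=
  if F.rowDeficit p = 0 then F
  else of fun i j => F i j + F.rowDeficit p i * Fᵀ.rowDeficit q j / ∑ k, |F.rowDeficit p k|

section shrinkToMarginals

variable {M : Matrix ι κ ℝ} {p : ι → ℝ} {q : κ → ℝ}

lemma shrinkToMarginals_nonneg (hM : ∀ i j, 0 ≤ M i j) (hp : ∀ i, 0 ≤ p i)
    (hq : ∀ j, 0 ≤ q j) (i : ι) (j : κ) : 0 ≤ M.shrinkToMarginals p q i j :=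
  mul_nonneg (mul_nonneg (rowScaling_nonneg hM hp i) (hM i j))
    (rowScaling_nonneg (fun j i => hM i j) hq j)

lemma sum_shrinkToMarginals_row_le (hM : ∀ i j, 0 ≤ M i j) (hp : ∀ i, 0 ≤ p i) (i : ι) :
    ∑ j, M.shrinkToMarginals p q i j ≤ p i :=
  calc ∑ j, M.shrinkToMarginals p q i j ≤ ∑ j, M.rowScaling p i * M i j :=
        sum_le_sum fun j _ => mul_le_of_le_one_right
          (mul_nonneg (rowScaling_nonneg hM hp i) (hM i j)) (rowScaling_le_one j)
    _ = M.rowScaling p i * ∑ j, M i j := (mul_sum ..).symm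
    _ ≤ p i := rowScaling_mul_sum_le hM hp i

lemma sum_shrinkToMarginals_col_le (hM : ∀ i j, 0 ≤ M i j) (hq : ∀ j, 0 ≤ q j) (j : κ) :
    ∑ i, M.shrinkToMarginals p q i j ≤ q j :=
  calc ∑ i, M.shrinkToMarginals p q i j ≤ ∑ i, Mᵀ.rowScaling q j * Mᵀ j i := by
        refine sum_le_sum fun i _ => ?_
        rw [mul_comm (Mᵀ.rowScaling q j)]
        exact mul_le_mul_of_nonneg_right
          (mul_le_of_le_one_left (hM i j) (rowScaling_le_one i))
          (rowScaling_nonneg (fun j i => hM i j) hq j)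
    _ = Mᵀ.rowScaling q j * ∑ i, Mᵀ j i := (mul_sum ..).symm
    _ ≤ q j := rowScaling_mul_sum_le (fun j i => hM i j) hq j

lemma shrinkToMarginals_le (hM : ∀ i j, 0 ≤ M i j) (hq : ∀ j, 0 ≤ q j) (i : ι) (j : κ) :
    M.shrinkToMarginals p q i j ≤ M i j :=
  calc M.rowScaling p i * M i j * Mᵀ.rowScaling q j ≤ 1 * M i j * 1 :=
        mul_le_mul (mul_le_mul_of_nonneg_right (rowScaling_le_one i) (hM i j))
          (rowScaling_le_one j) (rowScaling_nonneg (fun j i => hM i j) hq j)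
          (by simpa using hM i j)
    _ = M i j := by ring

lemma sum_sub_shrinkToMarginals_le (hM : ∀ i j, 0 ≤ M i j) (hp : ∀ i, 0 ≤ p i)
    (hq : ∀ j, 0 ≤ q j) :
    ∑ i, ∑ j, (M i j - M.shrinkToMarginals p q i j)
      ≤ ∑ i, (∑ j, M i j - p i)⁺ + ∑ j, (∑ i, M i j - q j)⁺ := by
  set a := M.rowScaling p
  set b := Mᵀ.rowScaling q
  have hpt : ∀ i j, M i j - a i * M i j * b j ≤ (1 - a i) * M i j + (1 - b j) * M i j := by
    intro i j
    have slack : 0 ≤ (1 - a i) * (1 - b j) * M i j :=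
      mul_nonneg (mul_nonneg (sub_nonneg.2 (rowScaling_le_one i))
        (sub_nonneg.2 (rowScaling_le_one j))) (hM i j)
    linarith
  calc ∑ i, ∑ j, (M i j - M.shrinkToMarginals p q i j)
      ≤ ∑ i, ∑ j, ((1 - a i) * M i j + (1 - b j) * M i j) :=
        sum_le_sum fun i _ => sum_le_sum fun j _ => hpt i j
    _ = ∑ i, (1 - a i) * ∑ j, M i j + ∑ j, (1 - b j) * ∑ i, M i j := by
        simp only [sum_add_distrib, mul_sum]
        rw [sum_comm (f := fun i j => (1 - b j) * M i j)]
    _ = _ := congrArg₂ (· + ·) (sum_congr rfl fun i _ => one_sub_rowScaling_mul_sum hM hp i)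
        (sum_congr rfl fun j _ => one_sub_rowScaling_mul_sum (fun j i => hM i j) hq j)

lemma two_mul_sum_sub_shrinkToMarginals_le (hM : ∀ i j, 0 ≤ M i j) (hp : ∀ i, 0 ≤ p i)
    (hq : ∀ j, 0 ≤ q j) (hMp : ∑ i, ∑ j, M i j = ∑ i, p i)
    (hMq : ∑ i, ∑ j, M i j = ∑ j, q j) :
    2 * ∑ i, ∑ j, (M i j - M.shrinkToMarginals p q i j)
      ≤ ∑ i, |∑ j, M i j - p i| + ∑ j, |∑ i, M i j - q j| := by
  rw [sum_abs_eq_two_mul_sum_posPart (by rw [sum_sub_distrib, hMp, sub_self]),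
    sum_abs_eq_two_mul_sum_posPart (by rw [sum_sub_distrib, sum_comm, hMq, sub_self]),
    ← mul_add]
  exact mul_le_mul_of_nonneg_left (sum_sub_shrinkToMarginals_le hM hp hq) zero_le_two

end shrinkToMarginals

section completeMarginals

variable {F : Matrix ι κ ℝ} {p : ι → ℝ} {q : κ → ℝ}

lemma sum_rowDeficit (F : Matrix ι κ ℝ) (p : ι → ℝ) :
    ∑ i, F.rowDeficit p i = ∑ i, p i - ∑ i, ∑ j, F i j :=
  sum_sub_distrib ..

lemma sum_rowDeficit_transpose (F : Matrix ι κ ℝ) (q : κ → ℝ) :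
    ∑ j, Fᵀ.rowDeficit q j = ∑ j, q j - ∑ i, ∑ j, F i j := by
  rw [sum_rowDeficit]
  exact congrArg _ sum_comm

lemma transpose_rowDeficit_eq_zero (hcol : ∀ j, ∑ i, F i j ≤ q j)
    (hpq : ∑ i, p i = ∑ j, q j) (h : F.rowDeficit p = 0) : Fᵀ.rowDeficit q = 0 := by
  have hsum : ∑ j, Fᵀ.rowDeficit q j = 0 := by
    rw [sum_rowDeficit_transpose, ← hpq, ← sum_rowDeficit, h]
    exact sum_const_zero
  funext j
  exact (sum_eq_zero_iff_of_nonneg fun j _ => sub_nonneg.2 (hcol j)).1 hsum j (mem_univ j)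

lemma sum_abs_rowDeficit (hrow : ∀ i, ∑ j, F i j ≤ p i) :
    ∑ k, |F.rowDeficit p k| = ∑ k, F.rowDeficit p k :=
  sum_congr rfl fun k _ => abs_of_nonneg (sub_nonneg.2 (hrow k))

lemma sum_abs_rowDeficit_eq_sum_transpose (hrow : ∀ i, ∑ j, F i j ≤ p i)
    (hpq : ∑ i, p i = ∑ j, q j) : ∑ k, |F.rowDeficit p k| = ∑ k, Fᵀ.rowDeficit q k := by
  rw [sum_abs_rowDeficit hrow, sum_rowDeficit, sum_rowDeficit_transpose, hpq]

lemma le_completeMarginals (hrow : ∀ i, ∑ j, F i j ≤ p i) (hcol : ∀ j, ∑ i, F i j ≤ q j)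
    (i : ι) (j : κ) : F i j ≤ F.completeMarginals p q i j := by
  unfold completeMarginals
  split_ifs
  · rfl
  · exact le_add_of_nonneg_right <| div_nonneg
      (mul_nonneg (sub_nonneg.2 (hrow i)) (sub_nonneg.2 (hcol j)))
      (sum_nonneg fun k _ => abs_nonneg _)

lemma sum_completeMarginals_row (hrow : ∀ i, ∑ j, F i j ≤ p i) (hpq : ∑ i, p i = ∑ j, q j)
    (i : ι) : ∑ j, F.completeMarginals p q i j = p i := by
  unfold completeMarginals
  split_ifs with h
  · exact (sub_eq_zero.1 (congrFun h i)).symm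
  · simp only [of_apply, sum_add_distrib, ← sum_div, ← mul_sum]
    rw [← sum_abs_rowDeficit_eq_sum_transpose hrow hpq,
      mul_div_cancel_right₀ _ (sum_abs_ne_zero h), rowDeficit, add_sub_cancel]

lemma sum_completeMarginals_col (hrow : ∀ i, ∑ j, F i j ≤ p i) (hcol : ∀ j, ∑ i, F i j ≤ q j)
    (hpq : ∑ i, p i = ∑ j, q j) (j : κ) : ∑ i, F.completeMarginals p q i j = q j := by
  unfold completeMarginals
  split_ifs with h
  · exact (sub_eq_zero.1 (congrFun (transpose_rowDeficit_eq_zero hcol hpq h) j)).symm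
  · simp only [of_apply, sum_add_distrib, ← sum_div, ← sum_mul]
    rw [← sum_abs_rowDeficit hrow, mul_div_cancel_left₀ _ (sum_abs_ne_zero h)]
    exact add_sub_cancel _ _

lemma sum_abs_sub_completeMarginals_le {M : Matrix ι κ ℝ} (hFM : ∀ i j, F i j ≤ M i j)
    (hrow : ∀ i, ∑ j, F i j ≤ p i) (hcol : ∀ j, ∑ i, F i j ≤ q j)
    (hpq : ∑ i, p i = ∑ j, q j) (hMp : ∑ i, ∑ j, M i j = ∑ i, p i) :
    ∑ i, ∑ j, |M i j - F.completeMarginals p q i j| ≤ 2 * ∑ i, ∑ j, (M i j - F i j) := by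
  have hFR := le_completeMarginals hrow hcol (q := q)
  have hR := sum_completeMarginals_row hrow hpq
  set R := F.completeMarginals p q
  have hpt : ∀ i j, |M i j - R i j| ≤ (M i j - F i j) + (R i j - F i j) := fun i j =>
    abs_le.2 ⟨by linarith [hFM i j], by linarith [hFR i j]⟩
  have hmass : ∑ i, ∑ j, (R i j - F i j) = ∑ i, ∑ j, (M i j - F i j) := by
    simp only [sum_sub_distrib, hR, hMp]
  calc ∑ i, ∑ j, |M i j - R i j|
      ≤ ∑ i, ∑ j, ((M i j - F i j) + (R i j - F i j)) :=
        sum_le_sum fun i _ => sum_le_sum fun j _ => hpt i j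
    _ = ∑ i, ∑ j, (M i j - F i j) + ∑ i, ∑ j, (R i j - F i j) := by
        simp only [sum_add_distrib]
    _ = 2 * ∑ i, ∑ j, (M i j - F i j) := by rw [hmass, two_mul]

end completeMarginals

end Matrix

theorem rounding_onto_transport_polytope_general
    (n : ℕ)
    (p q : Fin n → ℝ)
    (hp : (∀ i, 0 ≤ p i) ∧ ∑ i, p i = 1)
    (hq : (∀ i, 0 ≤ q i) ∧ ∑ i, q i = 1)
    (πch : Matrix (Fin n) (Fin n) ℝ)
    (hπch_pos : ∀ i j, 0 < πch i j)
    (hπch_sum : ∑ i, ∑ j, πch i j = 1)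
    (F : Matrix (Fin n) (Fin n) ℝ)
    (hF : F = Matrix.of fun i j =>
      min (p i / ∑ k, πch i k) 1 * πch i j * min (q j / ∑ k, πch k j) 1)
    (ep eq' : Fin n → ℝ)
    (hep : ep = fun i => p i - ∑ j, F i j)
    (heq : eq' = fun j => q j - ∑ i, F i j)
    (πhat : Matrix (Fin n) (Fin n) ℝ)
    (hπhat : πhat = if ep = 0 then F
      else Matrix.of fun i j => F i j + ep i * eq' j / ∑ k, |ep k|) :
    ((∀ i j, 0 ≤ πhat i j) ∧ (∀ i, ∑ j, πhat i j = p i) ∧ (∀ j, ∑ i, πhat i j = q j)) ∧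
    (∑ i, ∑ j, |πch i j - πhat i j|)
      ≤ (∑ i, |(∑ j, πch i j) - p i|) + (∑ j, |(∑ i, πch i j) - q j|) := by
  obtain ⟨hp, hp_sum⟩ := hp
  obtain ⟨hq, hq_sum⟩ := hq
  have hπ : ∀ i j, 0 ≤ πch i j := fun i j => (hπch_pos i j).le
  have hπp : ∑ i, ∑ j, πch i j = ∑ i, p i := hπch_sum.trans hp_sum.symm
  have hπq : ∑ i, ∑ j, πch i j = ∑ j, q j := hπch_sum.trans hq_sum.symm
  subst hep heq
  obtain rfl : πhat = F.completeMarginals p q := hπhat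
  obtain rfl : F = πch.shrinkToMarginals p q := hF
  have hrow := sum_shrinkToMarginals_row_le (q := q) hπ hp
  have hcol := sum_shrinkToMarginals_col_le (p := p) hπ hq
  have hpq := hπp.symm.trans hπq
  refine ⟨⟨fun i j => (shrinkToMarginals_nonneg hπ hp hq i j).trans
      (le_completeMarginals hrow hcol i j),
    sum_completeMarginals_row hrow hpq, sum_completeMarginals_col hrow hcol hpq⟩, ?_⟩
  calc _ ≤ 2 * ∑ i, ∑ j, (πch i j - πch.shrinkToMarginals p q i j) :=
        sum_abs_sub_completeMarginals_le (shrinkToMarginals_le hπ hq) hrow hcol hpq hπp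
    _ ≤ _ := two_mul_sum_sub_shrinkToMarginals_le hπ hp hq hπp hπq

/-- correctness of the rounding procedure onto the transportation
polytope `U(p,q)`: the output `π̂` is a feasible plan and its `ℓ₁` distance to the
input `π̌` is bounded by the total `ℓ₁` violation of the marginal constraints. -/
theorem rounding_onto_transport_polytope
    (n : ℕ) (hn : 2 ≤ n)
    (p q : Fin n → ℝ)
    (hp : (∀ i, 0 ≤ p i) ∧ ∑ i, p i = 1)
    (hq : (∀ i, 0 ≤ q i) ∧ ∑ i, q i = 1)
    (πch : Matrix (Fin n) (Fin n) ℝ)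
    (hπch_pos : ∀ i j, 0 < πch i j)
    (hπch_sum : ∑ i, ∑ j, πch i j = 1)
    (F : Matrix (Fin n) (Fin n) ℝ)
    (hF : F = Matrix.of fun i j =>
      min (p i / ∑ k, πch i k) 1 * πch i j * min (q j / ∑ k, πch k j) 1)
    (ep eq' : Fin n → ℝ)
    (hep : ep = fun i => p i - ∑ j, F i j)
    (heq : eq' = fun j => q j - ∑ i, F i j)
    (πhat : Matrix (Fin n) (Fin n) ℝ)
    (hπhat : πhat = if ep = 0 then F
      else Matrix.of fun i j => F i j + ep i * eq' j / ∑ k, |ep k|) :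
    ((∀ i j, 0 ≤ πhat i j) ∧ (∀ i, ∑ j, πhat i j = p i) ∧ (∀ j, ∑ i, πhat i j = q j)) ∧
    (∑ i, ∑ j, |πch i j - πhat i j|)
      ≤ (∑ i, |(∑ j, πch i j) - p i|) + (∑ j, |(∑ i, πch i j) - q j|) :=
  rounding_onto_transport_polytope_general n p q hp hq πch hπch_pos hπch_sum F hF ep eq' hep heq
    πhat hπhat
end

section
/- Explicit form of the Iterative Bregman Projections updates: let γ > 0, let K ∈ ℝ^{n×n} be defined by K_{ij} := exp(−C_{ij}/γ), let p_1, …, p_m ∈ S_n(1) have strictly positive entries, and define f(u,v) := (1/m) Σ_{l=1}^m { ⟨1, B(u_l,v_l)·1⟩ − ⟨u_l, p_l⟩ } for u = (u_1,…,u_m), v = (v_1,…,v_m) with u_l, v_l ∈ ℝ^n, where B(u_l,v_l) := diag(e^{u_l}) K diag(e^{v_l}). Then: (i) for every fixed v, the unique minimizer of f(·,v) over u is given componentwise by u_l = ln p_l − ln(K e^{v_l}) for l = 1,…,m; (ii) for every fixed u, the minimizer of f(u,·) over {v : Σ_{l=1}^m v_l = 0} is given by v_l = (1/m) Σ_{k=1}^m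 ln(K^T e^{u_k}) − ln(K^T e^{u_l}) for l = 1,…,m. -/
open Finset

/-- The IBP dual objective
`f(u,v) = (1/m) Σ_l { ⟨1, B(u_l,v_l)·1⟩ − ⟨u_l, p_l⟩ }` with
`B(u_l,v_l) = diag(e^{u_l}) K diag(e^{v_l})`. -/
noncomputable def ibpF (n m : ℕ) (K : Matrix (Fin n) (Fin n) ℝ)
    (p : Fin m → Fin n → ℝ) (u v : Fin m → Fin n → ℝ) : ℝ :=
  (1 / (m : ℝ)) * ∑ l, ((∑ i, ∑ j, Real.exp (u l i) * K i j * Real.exp (v l j))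
    - ∑ i, u l i * p l i)

/-!
Both updates come from the identity
`eᵗ a - t w = (eˢ a - s w) + w (e^{t-s} - 1 - (t - s))` whenever `eˢ a = w`,
whose last term is nonnegative and vanishes only at `t = s` since `eˣ ≥ 1 + x`.
In `u` the objective is a sum of such terms with `w = p`. In `v`, on the subspace
`Σ_l v_l = 0`, one may subtract the vanishing linear term `Σ_{l,j} G_j v_{lj}` with
`G_j` the geometric mean of the `(Kᵀ e^{u_l})_j`; this Lagrange multiplier makes the
unconstrained minimizer of the new sum satisfy the constraint.
-/

open Real

section ExpGap

variable {ι : Type*} [Fintype ι] {a w s : ι → ℝ}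

lemma exp_sub_log_mul {b : ℝ} (c : ℝ) (hb : 0 < b) : exp (c - log b) * b = exp c := by
  rw [exp_sub, exp_log hb, div_mul_cancel₀ _ hb.ne']

lemma exp_mul_sub_mul_eq {a w s : ℝ} (t : ℝ) (hs : exp s * a = w) :
    exp t * a - t * w = (exp s * a - s * w) + w * (exp (t - s) - 1 - (t - s)) := by
  have : exp t * a = exp (t - s) * w := by rw [← hs, ← mul_assoc, ← exp_add, sub_add_cancel]
  rw [this, hs]
  ring

lemma exp_mul_sub_mul_le {a w s : ℝ} (hw : 0 ≤ w) (hs : exp s * a = w) (t : ℝ) :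
    exp s * a - s * w ≤ exp t * a - t * w := by
  rw [exp_mul_sub_mul_eq t hs]
  exact le_add_of_nonneg_right (mul_nonneg hw (by linarith [add_one_le_exp (t - s)]))

lemma exp_mul_sub_mul_lt {a w s t : ℝ} (hw : 0 < w) (hs : exp s * a = w) (ht : t ≠ s) :
    exp s * a - s * w < exp t * a - t * w := by
  rw [exp_mul_sub_mul_eq t hs]
  exact lt_add_of_pos_right _
    (mul_pos hw (by linarith [add_one_lt_exp (sub_ne_zero.mpr ht)]))

lemma sum_exp_mul_sub_mul_le (hw : ∀ i, 0 ≤ w i) (hs : ∀ i, exp (s i) * a i = w i)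
    (x : ι → ℝ) :
    ∑ i, (exp (s i) * a i - s i * w i) ≤ ∑ i, (exp (x i) * a i - x i * w i) :=
  sum_le_sum fun i _ => exp_mul_sub_mul_le (hw i) (hs i) (x i)

lemma eq_of_sum_exp_mul_sub_mul_le (hw : ∀ i, 0 < w i) (hs : ∀ i, exp (s i) * a i = w i)
    {x : ι → ℝ}
    (hx : ∑ i, (exp (x i) * a i - x i * w i) ≤ ∑ i, (exp (s i) * a i - s i * w i)) :
    x = s := by
  by_contra hne
  obtain ⟨i, hi⟩ := Function.ne_iff.mp hne
  refine hx.not_gt (sum_lt_sum (fun j _ => ?_) ⟨i, mem_univ i, ?_⟩)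
  · exact exp_mul_sub_mul_le (hw j).le (hs j) (x j)
  · exact exp_mul_sub_mul_lt (hw i) (hs i) hi

end ExpGap

section IBP

variable {n m : ℕ} {K : Matrix (Fin n) (Fin n) ℝ} {p : Fin m → Fin n → ℝ}

noncomputable def ibpU (K : Matrix (Fin n) (Fin n) ℝ) (p v : Fin m → Fin n → ℝ) :
    Fin m → Fin n → ℝ :=
  fun l i => log (p l i) - log (∑ j, K i j * exp (v l j))

noncomputable def ibpV (K : Matrix (Fin n) (Fin n) ℝ) (u : Fin m → Fin n → ℝ) :
    Fin m → Fin n → ℝ :=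
  fun l j => (1 / (m : ℝ)) * (∑ k, log (∑ i, K i j * exp (u k i)))
    - log (∑ i, K i j * exp (u l i))

lemma sum_mul_exp_pos (hn : 0 < n) (hK : ∀ i j, 0 < K i j) (x : Fin n → ℝ) (i : Fin n) :
    0 < ∑ j, K i j * exp (x j) :=
  sum_pos (fun j _ => mul_pos (hK i j) (exp_pos _)) ⟨⟨0, hn⟩, mem_univ _⟩

lemma ibpF_eq_sum_u (K : Matrix (Fin n) (Fin n) ℝ) (p u v : Fin m → Fin n → ℝ) :
    ibpF n m K p u v = (1 / (m : ℝ)) * ∑ q : Fin m × Fin n,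
      (exp (u q.1 q.2) * (∑ j, K q.2 j * exp (v q.1 j)) - u q.1 q.2 * p q.1 q.2) := by
  simp only [ibpF, Fintype.sum_prod_type, sum_sub_distrib, mul_sum, mul_assoc]

lemma ibpF_eq_sum_v (K : Matrix (Fin n) (Fin n) ℝ) (p u : Fin m → Fin n → ℝ)
    {v : Fin m → Fin n → ℝ} (hv : ∑ l, v l = 0) (G : Fin n → ℝ) :
    ibpF n m K p u v = (1 / (m : ℝ)) * (∑ q : Fin m × Fin n,
      (exp (v q.1 q.2) * (∑ i, K i q.2 * exp (u q.1 i)) - v q.1 q.2 * G q.2)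
      - ∑ l, ∑ i, u l i * p l i) := by
  have hvG : ∑ q : Fin m × Fin n, v q.1 q.2 * G q.2 = 0 := by
    rw [Fintype.sum_prod_type, sum_comm]
    refine sum_eq_zero fun j _ => ?_
    dsimp only
    rw [← sum_mul, ← Finset.sum_apply, hv, Pi.zero_apply, zero_mul]
  rw [sum_sub_distrib, hvG, sub_zero, Fintype.sum_prod_type, ibpF, sum_sub_distrib]
  congr 3 with l
  rw [sum_comm]
  simp only [mul_sum]
  exact sum_congr rfl fun j _ => sum_congr rfl fun i _ => by ring

theorem ibpU_unique_minimizer (hn : 0 < n) (hm : 0 < m) (hK : ∀ i j, 0 < K i j)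
    (hp : ∀ l i, 0 < p l i) (v : Fin m → Fin n → ℝ) :
    (∀ u', ibpF n m K p (ibpU K p v) v ≤ ibpF n m K p u' v) ∧
    (∀ u', (∀ u'', ibpF n m K p u' v ≤ ibpF n m K p u'' v) → u' = ibpU K p v) := by
  have hs : ∀ q : Fin m × Fin n, exp (ibpU K p v q.1 q.2) * (∑ j, K q.2 j * exp (v q.1 j))
      = p q.1 q.2 := fun q =>
    (exp_sub_log_mul _ (sum_mul_exp_pos hn hK _ _)).trans (exp_log (hp _ _))
  have hp' : ∀ q : Fin m × Fin n, 0 < p q.1 q.2 := fun q => hp q.1 q.2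
  have hm' : (0 : ℝ) < 1 / m := by positivity
  simp only [ibpF_eq_sum_u]
  refine ⟨fun u' => ?_, fun u' hu' => ?_⟩
  · exact mul_le_mul_of_nonneg_left
      (sum_exp_mul_sub_mul_le (fun q => (hp' q).le) hs fun q => u' q.1 q.2) hm'.le
  · have := eq_of_sum_exp_mul_sub_mul_le hp' hs (le_of_mul_le_mul_left (hu' (ibpU K p v)) hm')
    funext l i
    exact congrFun this (l, i)

lemma sum_ibpV (K : Matrix (Fin n) (Fin n) ℝ) (u : Fin m → Fin n → ℝ) (hm : 0 < m) :
    ∑ l, ibpV K u l = 0 := by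
  funext j
  simp only [Finset.sum_apply, ibpV, sum_sub_distrib, sum_const, card_univ, Fintype.card_fin,
    nsmul_eq_mul, Pi.zero_apply]
  field_simp
  ring

theorem ibpV_unique_constrained_minimizer (hn : 0 < n) (hm : 0 < m) (hK : ∀ i j, 0 < K i j)
    (u : Fin m → Fin n → ℝ) :
    ∑ l, ibpV K u l = 0 ∧
    (∀ v', ∑ l, v' l = 0 → ibpF n m K p u (ibpV K u) ≤ ibpF n m K p u v') ∧
    (∀ v', ∑ l, v' l = 0 →
      (∀ v'', ∑ l, v'' l = 0 → ibpF n m K p u v' ≤ ibpF n m K p u v'') → v' = ibpV K u) := by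
  have hKT : ∀ i j, 0 < K.transpose i j := fun i j => hK j i
  set G : Fin n → ℝ := fun j => exp ((1 / (m : ℝ)) * ∑ k, log (∑ i, K i j * exp (u k i)))
  have hs : ∀ q : Fin m × Fin n, exp (ibpV K u q.1 q.2) * (∑ i, K i q.2 * exp (u q.1 i))
      = G q.2 := fun q => exp_sub_log_mul _ (sum_mul_exp_pos hn hKT _ _)
  have hm' : (0 : ℝ) < 1 / m := by positivity
  have hsum := sum_ibpV K u hm
  refine ⟨hsum, fun v' hv' => ?_, fun v' hv' hmin => ?_⟩
  · rw [ibpF_eq_sum_v K p u hsum G, ibpF_eq_sum_v K p u hv' G]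
    exact mul_le_mul_of_nonneg_left (sub_le_sub_right
      (sum_exp_mul_sub_mul_le (fun _ => (exp_pos _).le) hs fun q => v' q.1 q.2) _) hm'.le
  · have h := hmin (ibpV K u) hsum
    rw [ibpF_eq_sum_v K p u hsum G, ibpF_eq_sum_v K p u hv' G] at h
    have := eq_of_sum_exp_mul_sub_mul_le (fun _ => exp_pos _) hs
      ((sub_le_sub_iff_right _).mp (le_of_mul_le_mul_left h hm'))
    funext l j
    exact congrFun this (l, j)

end IBP

theorem ibp_updates_explicit_general
    (n m : ℕ) (hn : 2 ≤ n) (hm : 1 ≤ m)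
    (C : Matrix (Fin n) (Fin n) ℝ)
    (γ : ℝ)
    (K : Matrix (Fin n) (Fin n) ℝ) (hK : ∀ i j, K i j = Real.exp (-(C i j) / γ))
    (p : Fin m → Fin n → ℝ)
    (hppos : ∀ l i, 0 < p l i) :
    (∀ v : Fin m → Fin n → ℝ,
      (∀ u' : Fin m → Fin n → ℝ,
        ibpF n m K p
          (fun l i => Real.log (p l i) - Real.log (∑ j, K i j * Real.exp (v l j))) v
          ≤ ibpF n m K p u' v) ∧
      (∀ u' : Fin m → Fin n → ℝ,
        (∀ u'' : Fin m → Fin n → ℝ, ibpF n m K p u' v ≤ ibpF n m K p u'' v) →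
        u' = fun l i => Real.log (p l i) - Real.log (∑ j, K i j * Real.exp (v l j))))
    ∧
    (∀ u : Fin m → Fin n → ℝ,
      ((∑ l, (fun l j => (1 / (m : ℝ)) * (∑ k, Real.log (∑ i, K i j * Real.exp (u k i)))
            - Real.log (∑ i, K i j * Real.exp (u l i))) l) = 0) ∧
      (∀ v' : Fin m → Fin n → ℝ, (∑ l, v' l) = 0 →
        ibpF n m K p u
          (fun l j => (1 / (m : ℝ)) * (∑ k, Real.log (∑ i, K i j * Real.exp (u k i)))
            - Real.log (∑ i, K i j * Real.exp (u l i)))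
          ≤ ibpF n m K p u v') ∧
      (∀ v' : Fin m → Fin n → ℝ, (∑ l, v' l) = 0 →
        (∀ v'' : Fin m → Fin n → ℝ, (∑ l, v'' l) = 0 →
          ibpF n m K p u v' ≤ ibpF n m K p u v'') →
        v' = fun l j => (1 / (m : ℝ)) * (∑ k, Real.log (∑ i, K i j * Real.exp (u k i)))
            - Real.log (∑ i, K i j * Real.exp (u l i)))) := by
  have hKpos : ∀ i j, 0 < K i j := fun i j => hK i j ▸ exp_pos _
  have hn' : 0 < n := by omega
  exact ⟨ibpU_unique_minimizer hn' hm hKpos hppos,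
    ibpV_unique_constrained_minimizer hn' hm hKpos⟩

/-- explicit form of the Iterative Bregman Projections updates:
(i) the unique minimizer in `u`, (ii) the unique minimizer in `v` over the subspace
`Σ_l v_l = 0`, both in closed form. -/
theorem ibp_updates_explicit
    (n m : ℕ) (hn : 2 ≤ n) (hm : 1 ≤ m)
    (C : Matrix (Fin n) (Fin n) ℝ) (hC : ∀ i j, 0 ≤ C i j)
    (γ : ℝ) (hγ : 0 < γ)
    (K : Matrix (Fin n) (Fin n) ℝ) (hK : ∀ i j, K i j = Real.exp (-(C i j) / γ))
    (p : Fin m → Fin n → ℝ)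
    (hp : ∀ l, (∀ i, 0 ≤ p l i) ∧ ∑ i, p l i = 1)
    (hppos : ∀ l i, 0 < p l i) :
    (∀ v : Fin m → Fin n → ℝ,
      (∀ u' : Fin m → Fin n → ℝ,
        ibpF n m K p
          (fun l i => Real.log (p l i) - Real.log (∑ j, K i j * Real.exp (v l j))) v
          ≤ ibpF n m K p u' v) ∧
      (∀ u' : Fin m → Fin n → ℝ,
        (∀ u'' : Fin m → Fin n → ℝ, ibpF n m K p u' v ≤ ibpF n m K p u'' v) →
        u' = fun l i => Real.log (p l i) - Real.log (∑ j, K i j * Real.exp (v l j))))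
    ∧
    (∀ u : Fin m → Fin n → ℝ,
      ((∑ l, (fun l j => (1 / (m : ℝ)) * (∑ k, Real.log (∑ i, K i j * Real.exp (u k i)))
            - Real.log (∑ i, K i j * Real.exp (u l i))) l) = 0) ∧
      (∀ v' : Fin m → Fin n → ℝ, (∑ l, v' l) = 0 →
        ibpF n m K p u
          (fun l j => (1 / (m : ℝ)) * (∑ k, Real.log (∑ i, K i j * Real.exp (u k i)))
            - Real.log (∑ i, K i j * Real.exp (u l i)))
          ≤ ibpF n m K p u v') ∧
      (∀ v' : Fin m → Fin n → ℝ, (∑ l, v' l) = 0 →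
        (∀ v'' : Fin m → Fin n → ℝ, (∑ l, v'' l) = 0 →
          ibpF n m K p u v' ≤ ibpF n m K p u v'') →
        v' = fun l j => (1 / (m : ℝ)) * (∑ k, Real.log (∑ i, K i j * Real.exp (u k i)))
            - Real.log (∑ i, K i j * Real.exp (u l i)))) :=
  ibp_updates_explicit_general n m hn hm C γ K hK p hppos
end

section
/- Bilinear saddle-point representation of the OT value: let d ∈ ℝ^{n²} be the vectorization of the cost matrix C with ‖d‖_∞ := max_k |d_k| > 0, and let A ∈ {0,1}^{2n×n²} be the incidence matrix such that for x ∈ ℝ^{n²} with matrix form X ∈ ℝ^{n×n}, Ax is the concatenation of the row sums X·1 and the column sums X^T·1. Then for all p, q ∈ S_n(1): W(p,q) = min_{x ∈ S_{n²}(1)} max_{y ∈ [−1,1]^{2n}} { ⟨d, x⟩ + 2‖d‖_∞ ( ⟨y, Ax⟩ − ⟨(p;q), y⟩ ) }, where (p;q) ∈ ℝ^{2n} is the concatenation of p and q. -/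
/-!
The penalized objective `⟨d, x⟩ + 2‖d‖_∞ ‖Ax - (p;q)‖₁` is what the inner maximum over the box
evaluates to, and it agrees with the transport cost on couplings. Conversely, any `x` in the simplex
can be rounded to a coupling whose cost exceeds `⟨d, x⟩` by at most `‖d‖_∞ ‖Ax - (p;q)‖₁`: scale
the rows down to at most `p`, then the columns down to at most `q`, and spread the missing mass as
the rank-one matrix `e fᵀ / E` of the row and column deficits.
-/

open Finset
open scoped Matrix

variable {ι κ : Type*}

lemma exists_mul_eq_min {r t : ℝ} (hr : 0 ≤ r) (ht : 0 ≤ t) :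
    ∃ α, 0 ≤ α ∧ α ≤ 1 ∧ α * r = min t r := by
  rcases lt_or_ge t r with h | h
  · have hr' : 0 < r := ht.trans_lt h
    exact ⟨t / r, div_nonneg ht hr, (div_le_one hr').2 h.le,
      by rw [div_mul_cancel₀ _ hr'.ne', min_eq_left h.le]⟩
  · exact ⟨1, zero_le_one, le_rfl, by rw [one_mul, min_eq_right h]⟩

lemma exists_rowSum_eq_min [Fintype κ] (X : Matrix ι κ ℝ) (hX : ∀ i j, 0 ≤ X i j) (t : ι → ℝ)
    (ht : ∀ i, 0 ≤ t i) :
    ∃ Y : Matrix ι κ ℝ, (∀ i j, 0 ≤ Y i j ∧ Y i j ≤ X i j) ∧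
      ∀ i, ∑ j, Y i j = min (t i) (∑ j, X i j) := by
  choose α hα0 hα1 hα using fun i => exists_mul_eq_min (sum_nonneg fun j _ => hX i j) (ht i)
  refine ⟨fun i j => α i * X i j,
    fun i j => ⟨mul_nonneg (hα0 i) (hX i j), mul_le_of_le_one_left (hX i j) (hα1 i)⟩,
    fun i => ?_⟩
  rw [← mul_sum, hα]

lemma exists_colSum_eq_min [Fintype ι] (X : Matrix ι κ ℝ) (hX : ∀ i j, 0 ≤ X i j) (t : κ → ℝ)
    (ht : ∀ j, 0 ≤ t j) :
    ∃ Y : Matrix ι κ ℝ, (∀ i j, 0 ≤ Y i j ∧ Y i j ≤ X i j) ∧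
      ∀ j, ∑ i, Y i j = min (t j) (∑ i, X i j) := by
  obtain ⟨Y, hY, hsum⟩ := exists_rowSum_eq_min Xᵀ (fun j i => hX i j) t ht
  exact ⟨Yᵀ, fun i j => hY j i, hsum⟩

variable [Fintype ι] [Fintype κ]

def IsCoupling (π : Matrix ι κ ℝ) (p : ι → ℝ) (q : κ → ℝ) : Prop :=
  (∀ i j, 0 ≤ π i j) ∧ (∀ i, ∑ j, π i j = p i) ∧ (∀ j, ∑ i, π i j = q j)

def transportCost (C X : Matrix ι κ ℝ) : ℝ := ∑ i, ∑ j, C i j * X i j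

def marginalError (X : Matrix ι κ ℝ) (p : ι → ℝ) (q : κ → ℝ) : ℝ :=
  ∑ i, |∑ j, X i j - p i| + ∑ j, |∑ i, X i j - q j|

lemma isCoupling_mul {p : ι → ℝ} {q : κ → ℝ} (hp : ∀ i, 0 ≤ p i) (hq : ∀ j, 0 ≤ q j)
    (hp1 : ∑ i, p i = 1) (hq1 : ∑ j, q j = 1) : IsCoupling (fun i j => p i * q j) p q :=
  ⟨fun i j => mul_nonneg (hp i) (hq j), fun i => by rw [← mul_sum, hq1, mul_one],
    fun j => by rw [← sum_mul, hp1, one_mul]⟩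

lemma IsCoupling.marginalError_eq_zero {π : Matrix ι κ ℝ} {p : ι → ℝ} {q : κ → ℝ}
    (hπ : IsCoupling π p q) : marginalError π p q = 0 := by
  simp [marginalError, hπ.2.1, hπ.2.2]

lemma marginalError_nonneg (X : Matrix ι κ ℝ) (p : ι → ℝ) (q : κ → ℝ) :
    0 ≤ marginalError X p q := by
  unfold marginalError; positivity

lemma sum_abs_sumElim_sub_eq_marginalError (x : ι × κ → ℝ) (p : ι → ℝ) (q : κ → ℝ) :
    ∑ s, |Sum.elim (fun i => ∑ j, x (i, j)) (fun j => ∑ i, x (i, j)) s - Sum.elim p q s|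
      = marginalError (Function.curry x) p q := by
  simp [Fintype.sum_sum_type, marginalError]

lemma transportCost_nonneg {C X : Matrix ι κ ℝ} (hC : ∀ i j, 0 ≤ C i j) (hX : ∀ i j, 0 ≤ X i j) :
    0 ≤ transportCost C X :=
  sum_nonneg fun i _ => sum_nonneg fun j _ => mul_nonneg (hC i j) (hX i j)

lemma transportCost_mono {C X Y : Matrix ι κ ℝ} (hC : ∀ i j, 0 ≤ C i j)
    (hXY : ∀ i j, X i j ≤ Y i j) : transportCost C X ≤ transportCost C Y :=
  sum_le_sum fun i _ => sum_le_sum fun j _ => mul_le_mul_of_nonneg_left (hXY i j) (hC i j)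

lemma transportCost_add (C X Y : Matrix ι κ ℝ) :
    transportCost C (X + Y) = transportCost C X + transportCost C Y := by
  simp only [transportCost, ← sum_add_distrib, Matrix.add_apply, mul_add]

/-- Also true for `E = 0`, where `a = 0 = a * 0 / 0`. -/
lemma mul_div_self_of_le {a E : ℝ} (ha : 0 ≤ a) (haE : a ≤ E) : a * E / E = a := by
  rcases eq_or_ne E 0 with hE | hE
  · rw [hE, mul_zero, div_zero]; exact (le_antisymm (hE ▸ haE) ha).symm
  · exact mul_div_cancel_right₀ a hE

lemma exists_coupling_cost_le_of_le_marginals {p : ι → ℝ} {q : κ → ℝ} (C Y : Matrix ι κ ℝ)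
    {D : ℝ} (hCD : ∀ i j, C i j ≤ D) (hY : ∀ i j, 0 ≤ Y i j)
    (hrow : ∀ i, ∑ j, Y i j ≤ p i) (hcol : ∀ j, ∑ i, Y i j ≤ q j)
    (hpq : ∑ i, p i = ∑ j, q j) :
    ∃ π, IsCoupling π p q ∧
      transportCost C π ≤ transportCost C Y + D * (∑ i, p i - ∑ i, ∑ j, Y i j) := by
  set E := ∑ i, p i - ∑ i, ∑ j, Y i j
  set e : ι → ℝ := fun i => p i - ∑ j, Y i j
  set f : κ → ℝ := fun j => q j - ∑ i, Y i j
  have he : ∀ i, 0 ≤ e i := fun i => sub_nonneg.2 (hrow i)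
  have hf : ∀ j, 0 ≤ f j := fun j => sub_nonneg.2 (hcol j)
  have hsum_e : ∑ i, e i = E := sum_sub_distrib ..
  have hsum_f : ∑ j, f j = E := by
    rw [sum_sub_distrib, ← hpq, sum_comm]
  have hR : ∀ i j, 0 ≤ e i * f j / E :=
    fun i j => div_nonneg (mul_nonneg (he i) (hf j)) (hsum_e ▸ sum_nonneg fun i _ => he i)
  refine ⟨Y + Matrix.of fun i j => e i * f j / E,
    ⟨fun i j => add_nonneg (hY i j) (hR i j), fun i => ?_, fun j => ?_⟩, ?_⟩
  · have hi : ∑ j, e i * f j / E = e i := by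
      rw [← sum_div, ← mul_sum, hsum_f,
        mul_div_self_of_le (he i) (hsum_e ▸ single_le_sum (fun k _ => he k) (mem_univ i))]
    simp only [Matrix.add_apply, Matrix.of_apply]
    rw [sum_add_distrib, hi]
    ring
  · have hj : ∑ i, e i * f j / E = f j := by
      rw [← sum_div, ← sum_mul, hsum_e, mul_comm,
        mul_div_self_of_le (hf j) (hsum_f ▸ single_le_sum (fun k _ => hf k) (mem_univ j))]
    simp only [Matrix.add_apply, Matrix.of_apply]
    rw [sum_add_distrib, hj]
    ring
  · rw [transportCost_add]
    gcongr
    calc transportCost C (Matrix.of fun i j => e i * f j / E)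
        ≤ ∑ i, ∑ j, D * (e i * f j / E) :=
          sum_le_sum fun i _ => sum_le_sum fun j _ => mul_le_mul_of_nonneg_right (hCD i j) (hR i j)
      _ = D * (E * E / E) := by
          simp only [← mul_sum, ← sum_div, ← sum_mul, hsum_e, hsum_f]
      _ = D * E := by rw [mul_self_div_self]

lemma sub_min_le_abs_sub {a b c : ℝ} (hab : a ≤ b) : a - min c a ≤ |b - c| := by
  rcases le_total c a with h | h
  · rw [min_eq_left h]; exact (sub_le_sub_right hab c).trans (le_abs_self _)
  · rw [min_eq_right h, sub_self]; exact abs_nonneg _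

theorem exists_coupling_cost_le {p : ι → ℝ} {q : κ → ℝ} (C X : Matrix ι κ ℝ)
    (hC : ∀ i j, 0 ≤ C i j) {D : ℝ} (hD : 0 ≤ D) (hCD : ∀ i j, C i j ≤ D)
    (hX : ∀ i j, 0 ≤ X i j) (hp : ∀ i, 0 ≤ p i) (hq : ∀ j, 0 ≤ q j)
    (hpq : ∑ i, p i = ∑ j, q j) :
    ∃ π, IsCoupling π p q ∧ transportCost C π ≤ transportCost C X + D * marginalError X p q := by
  obtain ⟨X₁, hX₁, hrow₁⟩ := exists_rowSum_eq_min X hX p hp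
  obtain ⟨Y, hY, hcol⟩ := exists_colSum_eq_min X₁ (fun i j => (hX₁ i j).1) q hq
  have hrowY : ∀ i, ∑ j, Y i j ≤ p i := fun i =>
    (sum_le_sum fun j _ => (hY i j).2).trans ((hrow₁ i).trans_le (min_le_left _ _))
  have hcolY : ∀ j, ∑ i, Y i j ≤ q j := fun j => (hcol j).trans_le (min_le_left _ _)
  obtain ⟨π, hπ, hcost⟩ := exists_coupling_cost_le_of_le_marginals C Y hCD
    (fun i j => (hY i j).1) hrowY hcolY hpq
  have hmass : ∑ i, p i - ∑ i, ∑ j, Y i j ≤ marginalError X p q := by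
    have hmass₁ : ∑ i, ∑ j, X₁ i j = ∑ i, min (p i) (∑ j, X i j) :=
      sum_congr rfl fun i _ => hrow₁ i
    have hmassY : ∑ i, ∑ j, Y i j = ∑ j, min (q j) (∑ i, X₁ i j) :=
      sum_comm.trans (sum_congr rfl fun j _ => hcol j)
    calc ∑ i, p i - ∑ i, ∑ j, Y i j
        = ∑ i, (p i - min (∑ j, X i j) (p i)) +
            ∑ j, (∑ i, X₁ i j - min (q j) (∑ i, X₁ i j)) := by
          simp only [sum_sub_distrib, min_comm _ (p _), ← hmass₁, ← hmassY, sum_comm (f := X₁)]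
          ring
      _ ≤ marginalError X p q := by
          refine add_le_add (sum_le_sum fun i _ => ?_) (sum_le_sum fun j _ => ?_)
          · rw [abs_sub_comm]; exact sub_min_le_abs_sub le_rfl
          · exact sub_min_le_abs_sub (sum_le_sum fun i _ => (hX₁ i j).2)
  refine ⟨π, hπ, hcost.trans ?_⟩
  gcongr
  exact transportCost_mono hC fun i j => (hY i j).2.trans (hX₁ i j).2

lemma isGreatest_sum_mul_image_unitBox {σ : Type*} [Fintype σ] (v : σ → ℝ) :
    IsGreatest ((fun y : σ → ℝ => ∑ s, y s * v s) '' {y | ∀ s, |y s| ≤ 1}) (∑ s, |v s|) := by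
  refine ⟨⟨fun s => SignType.sign (v s), fun s => ?_, by simp only [sign_mul_self]⟩, ?_⟩
  · rcases lt_trichotomy (v s) 0 with h | h | h <;> simp [h]
  · rintro _ ⟨y, hy, rfl⟩
    refine sum_le_sum fun s _ => ?_
    calc y s * v s ≤ |y s| * |v s| := (le_abs_self _).trans (abs_mul _ _).le
      _ ≤ |v s| := mul_le_of_le_one_left (abs_nonneg _) (hy s)

lemma sSup_image_unitBox_add_mul_sub {σ : Type*} [Fintype σ] (c : ℝ) {M : ℝ} (hM : 0 ≤ M)
    (a b : σ → ℝ) :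
    sSup ((fun y : σ → ℝ => c + M * ((∑ s, y s * a s) - ∑ s, b s * y s)) '' {y | ∀ s, |y s| ≤ 1})
      = c + M * ∑ s, |a s - b s| := by
  set v := a - b
  have hbilin : ∀ y : σ → ℝ, (∑ s, y s * a s) - ∑ s, b s * y s = ∑ s, y s * v s := fun y => by
    rw [← sum_sub_distrib]; exact sum_congr rfl fun s _ => by simp only [v, Pi.sub_apply]; ring
  simp only [hbilin]
  have hmono : Monotone fun t : ℝ => c + M * t := fun a b hab =>
    add_le_add_right (mul_le_mul_of_nonneg_left hab hM) c
  rw [show (fun y : σ → ℝ => c + M * ∑ s, y s * v s)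
      = (fun t => c + M * t) ∘ fun y => ∑ s, y s * v s from rfl, Set.image_comp]
  exact (hmono.map_isGreatest (isGreatest_sum_mul_image_unitBox v)).csSup_eq

lemma csInf_eq_csInf_of_subset_of_forall_exists_le {S T : Set ℝ} (hS : BddBelow S)
    (hSne : S.Nonempty) (hST : S ⊆ T) (hTS : ∀ t ∈ T, ∃ s ∈ S, s ≤ t) : sInf S = sInf T := by
  have hT : BddBelow T := by
    obtain ⟨b, hb⟩ := hS
    refine ⟨b, fun t ht => ?_⟩
    obtain ⟨s, hs, hst⟩ := hTS t ht
    exact (hb hs).trans hst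
  refine le_antisymm (le_csInf (hSne.mono hST) fun t ht => ?_) (csInf_le_csInf hT hSne hST)
  obtain ⟨s, hs, hst⟩ := hTS t ht
  exact (csInf_le hS hs).trans hst

theorem ot_saddle_point_representation_general
    (n : ℕ) (C : Matrix (Fin n) (Fin n) ℝ)
    (hC : ∀ i j, 0 ≤ C i j)
    -- the vectorized cost
    (d : Fin n × Fin n → ℝ) (hd : d = fun k => C k.1 k.2)
    -- its sup-norm ‖d‖_∞, assumed positive
    (dmax : ℝ) (hdmax : IsGreatest (Set.range fun k => |d k|) dmax)
    -- the incidence operator: row sums and column sums of the matrix form of x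
    (A : (Fin n × Fin n → ℝ) → (Fin n ⊕ Fin n → ℝ))
    (hA : ∀ x, A x = Sum.elim (fun i => ∑ j, x (i, j)) (fun j => ∑ i, x (i, j)))
    (p q : Fin n → ℝ)
    (hp : (∀ i, 0 ≤ p i) ∧ ∑ i, p i = 1)
    (hq : (∀ i, 0 ≤ q i) ∧ ∑ i, q i = 1) :
    sInf ((fun π : Matrix (Fin n) (Fin n) ℝ => ∑ i, ∑ j, C i j * π i j) ''
        {π | (∀ i j, 0 ≤ π i j) ∧ (∀ i, ∑ j, π i j = p i) ∧ (∀ j, ∑ i, π i j = q j)})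
      =
    sInf ((fun x : Fin n × Fin n → ℝ =>
        sSup ((fun y : Fin n ⊕ Fin n → ℝ =>
            (∑ k, d k * x k) + 2 * dmax *
              ((∑ s, y s * A x s) - ∑ s, Sum.elim p q s * y s)) ''
          {y | ∀ s, |y s| ≤ 1})) ''
      {x | (∀ k, 0 ≤ x k) ∧ ∑ k, x k = 1}) := by
  obtain ⟨hp0, hp1⟩ := hp
  obtain ⟨hq0, hq1⟩ := hq
  obtain ⟨⟨k₀, hk₀⟩, hdmax_ub⟩ := hdmax
  have hdmax0 : 0 ≤ dmax := hk₀ ▸ abs_nonneg _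
  have hCd : ∀ i j, C i j ≤ dmax := fun i j => by
    simpa [hd, abs_of_nonneg (hC i j)] using hdmax_ub ⟨(i, j), rfl⟩
  have hcost : ∀ x, ∑ k, d k * x k = transportCost C (Function.curry x) := fun x => by
    rw [hd, Fintype.sum_prod_type]; rfl
  rw [Set.image_congr fun x _ => sSup_image_unitBox_add_mul_sub (∑ k, d k * x k)
    (by positivity : 0 ≤ 2 * dmax) (A x) (Sum.elim p q)]
  simp only [hA, sum_abs_sumElim_sub_eq_marginalError, hcost]
  refine csInf_eq_csInf_of_subset_of_forall_exists_le
    ⟨0, ?_⟩ ⟨_, _, isCoupling_mul hp0 hq0 hp1 hq1, rfl⟩ ?_ ?_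
  · rintro _ ⟨π, hπ, rfl⟩
    exact transportCost_nonneg hC hπ.1
  · rintro _ ⟨π, hπ, rfl⟩
    refine ⟨fun k => π k.1 k.2, ⟨fun k => hπ.1 k.1 k.2, ?_⟩, ?_⟩
    · rw [Fintype.sum_prod_type]; simp only [hπ.2.1, hp1]
    · change transportCost C π + 2 * dmax * marginalError π p q = transportCost C π
      rw [IsCoupling.marginalError_eq_zero hπ, mul_zero, add_zero]
  · rintro _ ⟨x, ⟨hx0, -⟩, rfl⟩
    obtain ⟨π, hπ, hπcost⟩ := exists_coupling_cost_le C (Function.curry x) hC hdmax0 hCd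
      (fun i j => hx0 (i, j)) hp0 hq0 (hp1.trans hq1.symm)
    have hΔ := marginalError_nonneg (Function.curry x) p q
    exact ⟨_, ⟨π, hπ, rfl⟩, hπcost.trans (by linarith [mul_nonneg hdmax0 hΔ])⟩

/-- bilinear saddle-point representation of the OT value:
`W(p,q) = min_{x ∈ S_{n²}(1)} max_{y ∈ [−1,1]^{2n}}
  { ⟨d,x⟩ + 2‖d‖_∞ (⟨y, Ax⟩ − ⟨(p;q), y⟩) }`. -/
theorem ot_saddle_point_representation
    (n : ℕ) (hn : 2 ≤ n) (C : Matrix (Fin n) (Fin n) ℝ)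
    (hC : ∀ i j, 0 ≤ C i j)
    -- the vectorized cost
    (d : Fin n × Fin n → ℝ) (hd : d = fun k => C k.1 k.2)
    -- its sup-norm ‖d‖_∞, assumed positive
    (dmax : ℝ) (hdmax : IsGreatest (Set.range fun k => |d k|) dmax) (hdpos : 0 < dmax)
    -- the incidence operator: row sums and column sums of the matrix form of x
    (A : (Fin n × Fin n → ℝ) → (Fin n ⊕ Fin n → ℝ))
    (hA : ∀ x, A x = Sum.elim (fun i => ∑ j, x (i, j)) (fun j => ∑ i, x (i, j)))
    (p q : Fin n → ℝ)
    (hp : (∀ i, 0 ≤ p i) ∧ ∑ i, p i = 1)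
    (hq : (∀ i, 0 ≤ q i) ∧ ∑ i, q i = 1) :
    sInf ((fun π : Matrix (Fin n) (Fin n) ℝ => ∑ i, ∑ j, C i j * π i j) ''
        {π | (∀ i j, 0 ≤ π i j) ∧ (∀ i, ∑ j, π i j = p i) ∧ (∀ j, ∑ i, π i j = q j)})
      =
    sInf ((fun x : Fin n × Fin n → ℝ =>
        sSup ((fun y : Fin n ⊕ Fin n → ℝ =>
            (∑ k, d k * x k) + 2 * dmax *
              ((∑ s, y s * A x s) - ∑ s, Sum.elim p q s * y s)) ''
          {y | ∀ s, |y s| ≤ 1})) ''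
      {x | (∀ k, 0 ≤ x k) ∧ ∑ k, x k = 1}) :=
  ot_saddle_point_representation_general n C hC d hd dmax hdmax A hA p q hp hq
end
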